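/- arXiv:1007.0109 — 7 statements merged into one kernel-verified Lean document; each statement's English description precedes it below -/
import Mathlib

section
/- Let Z be a real random variable with Z ≥ 1 almost surely and Laplace transform g(s) = E[e^{-sZ}] for s > 0. Then the function w(s) = -e^s g'(s)/(1 - g(s)) is completely monotone on (0,∞), i.e., w is infinitely differentiable and (-1)^n w^{(n)}(x) ≥ 0 for all x > 0 and all n ≥ 0. -/
open MeasureTheory Real Set Filter Metric Topology

/-! Auxiliary lemmas for complete monotonicity of `w(s) = -e^s g'(s)/(1-g(s))`. -/

lemma cm_bound_aux {a y : ℝ} (ha : 0 < a) (hy : 0 ≤ y) (k : ℕ) :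
    y ^ k * Real.exp (-(a * y)) ≤ k.factorial / a ^ k := by
  have h1 : (a * y) ^ k / k.factorial ≤ Real.exp (a * y) :=
    Real.pow_div_factorial_le_exp _ (by positivity) k
  have hak : (0 : ℝ) < a ^ k := by positivity
  have hkf : (0 : ℝ) < (k.factorial : ℝ) := by positivity
  have hexp := Real.exp_pos (a * y)
  rw [div_le_iff₀ hkf, mul_pow] at h1
  rw [Real.exp_neg, div_eq_mul_inv, mul_comm ((k.factorial : ℝ))]
  rw [mul_inv_le_iff₀ hexp]
  calc y ^ k = (a ^ k)⁻¹ * (a ^ k * y ^ k) := by field_simp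
    _ ≤ (a ^ k)⁻¹ * (Real.exp (a * y) * k.factorial) :=
        mul_le_mul_of_nonneg_left h1 (inv_pos.mpr hak).le
    _ = (a ^ k)⁻¹ * ↑k.factorial * Real.exp (a * y) := by ring

lemma cm_pascal (a b : ℕ → ℝ) (n : ℕ) :
    ∑ k ∈ Finset.range (n + 2), ((n + 1).choose k : ℝ) * (a k * b (n + 1 - k))
      = ∑ k ∈ Finset.range (n + 1), (n.choose k : ℝ) * (a (k + 1) * b (n - k) + a k * b (n - k + 1)) := by
  have h1 : ∑ k ∈ Finset.range (n + 2), ((n + 1).choose k : ℝ) * (a k * b (n + 1 - k))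
      = (∑ k ∈ Finset.range (n + 1), ((n + 1).choose (k + 1) : ℝ) * (a (k + 1) * b (n - k)))
        + a 0 * b (n + 1) := by
    rw [Finset.sum_range_succ' (fun k => ((n + 1).choose k : ℝ) * (a k * b (n + 1 - k))) (n + 1)]
    simp
  have h2 : ∑ k ∈ Finset.range (n + 2), (n.choose k : ℝ) * (a k * b (n + 1 - k))
      = (∑ k ∈ Finset.range (n + 1), (n.choose (k + 1) : ℝ) * (a (k + 1) * b (n - k)))
        + a 0 * b (n + 1) := by
    rw [Finset.sum_range_succ' (fun k => (n.choose k : ℝ) * (a k * b (n + 1 - k))) (n + 1)]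
    simp
  have h3 : ∑ k ∈ Finset.range (n + 2), (n.choose k : ℝ) * (a k * b (n + 1 - k))
      = ∑ k ∈ Finset.range (n + 1), (n.choose k : ℝ) * (a k * b (n + 1 - k)) := by
    rw [Finset.sum_range_succ]; simp
  have h4 : ∀ k ∈ Finset.range (n + 1), (n.choose k : ℝ) * (a k * b (n + 1 - k))
      = (n.choose k : ℝ) * (a k * b (n - k + 1)) := by
    intro k hk
    rw [Finset.mem_range] at hk
    rw [Nat.sub_add_comm (Nat.lt_succ_iff.mp hk)]
  rw [h1]
  simp only [mul_add, Finset.sum_add_distrib]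
  have h5 : ∀ k ∈ Finset.range (n+1), (((n+1).choose (k+1) : ℝ)) * (a (k+1) * b (n-k))
      = (n.choose k : ℝ) * (a (k+1) * b (n-k)) + (n.choose (k+1) : ℝ) * (a (k+1) * b (n-k)) := by
    intro k _
    rw [Nat.choose_succ_succ]
    push_cast
    ring
  rw [Finset.sum_congr rfl h5, Finset.sum_add_distrib]
  rw [Finset.sum_congr rfl h4] at h3
  rw [← h3, h2]
  ring

lemma cm_chainIter {F : ℕ → ℝ → ℝ} {S : Set ℝ} (hS : IsOpen S)
    (hF : ∀ n, ∀ x ∈ S, HasDerivAt (F n) (-(F (n + 1) x)) x)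
    {φ : ℝ → ℝ} (hφ : Set.EqOn φ (F 0) S) :
    ∀ n, ∀ x ∈ S, iteratedDeriv n φ x = (-1 : ℝ) ^ n * F n x := by
  intro n
  induction n with
  | zero => intro x hx; simpa using hφ hx
  | succ n ih =>
    intro x hx
    rw [iteratedDeriv_succ]
    have hev : iteratedDeriv n φ =ᶠ[𝓝 x] fun y => (-1 : ℝ) ^ n * F n y := by
      filter_upwards [hS.mem_nhds hx] with y hy using ih y hy
    rw [hev.deriv_eq]
    have := ((hF n x hx).const_mul ((-1 : ℝ) ^ n)).deriv
    rw [this]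
    ring

lemma cm_analytic_iteratedDeriv {f : ℝ → ℝ} {S : Set ℝ} (hS : IsOpen S)
    (hf : AnalyticOnNhd ℝ f S) (k : ℕ) : AnalyticOnNhd ℝ (iteratedDeriv k f) S := by
  induction k with
  | zero => simpa [iteratedDeriv_zero] using hf
  | succ k ih => rw [iteratedDeriv_succ]; exact ih.deriv

lemma cm_leibniz {S : Set ℝ} (hS : IsOpen S) {f₁ f₂ : ℝ → ℝ}
    (h₁ : ∀ k, ∀ x ∈ S, DifferentiableAt ℝ (iteratedDeriv k f₁) x)
    (h₂ : ∀ k, ∀ x ∈ S, DifferentiableAt ℝ (iteratedDeriv k f₂) x) :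
    ∀ n, ∀ x ∈ S, iteratedDeriv n (fun y => f₁ y * f₂ y) x
      = ∑ k ∈ Finset.range (n + 1),
          (n.choose k : ℝ) * (iteratedDeriv k f₁ x * iteratedDeriv (n - k) f₂ x) := by
  intro n
  induction n with
  | zero => intro x hx; simp
  | succ n ih =>
    intro x hx
    rw [iteratedDeriv_succ]
    have hev : iteratedDeriv n (fun y => f₁ y * f₂ y) =ᶠ[𝓝 x]
        fun y => ∑ k ∈ Finset.range (n + 1),
          (n.choose k : ℝ) * (iteratedDeriv k f₁ y * iteratedDeriv (n - k) f₂ y) := by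
      filter_upwards [hS.mem_nhds hx] with y hy using ih y hy
    rw [hev.deriv_eq]
    have hterm : ∀ k ∈ Finset.range (n + 1),
        HasDerivAt (fun y => (n.choose k : ℝ) * (iteratedDeriv k f₁ y * iteratedDeriv (n - k) f₂ y))
          ((n.choose k : ℝ) * (iteratedDeriv (k + 1) f₁ x * iteratedDeriv (n - k) f₂ x
            + iteratedDeriv k f₁ x * iteratedDeriv (n - k + 1) f₂ x)) x := by
      intro k _
      have d1 := (h₁ k x hx).hasDerivAt
      have d2 := (h₂ (n - k) x hx).hasDerivAt
      have := (d1.mul d2).const_mul (n.choose k : ℝ)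
      simpa [← iteratedDeriv_succ] using this
    have hsum := HasDerivAt.fun_sum hterm
    rw [hsum.deriv]
    rw [show n + 1 + 1 = n + 2 from rfl]
    exact (cm_pascal (fun k => iteratedDeriv k f₁ x) (fun k => iteratedDeriv k f₂ x) n).symm


lemma cm_norm_integrand {z : ℂ} {a : ℝ} (ha : 0 < a) (haz : a ≤ z.re) (n : ℕ)
    {y fv : ℝ} (hy : 0 ≤ y) (hfv : 0 ≤ fv) (hfb : fv ≤ 1 + y) :
    ‖(fv : ℂ) * (y : ℂ) ^ n * Complex.exp (-(z * y))‖
      ≤ n.factorial / a ^ n + (n + 1).factorial / a ^ (n + 1) := by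
  have hnorm : ‖(fv : ℂ) * (y : ℂ) ^ n * Complex.exp (-(z * y))‖
      = fv * y ^ n * Real.exp (-(z.re * y)) := by
    rw [norm_mul, norm_mul, norm_pow, Complex.norm_exp]
    simp [Complex.norm_real, abs_of_nonneg hfv, abs_of_nonneg hy, Complex.mul_re]
  rw [hnorm]
  have h1 : Real.exp (-(z.re * y)) ≤ Real.exp (-(a * y)) := by
    apply Real.exp_le_exp.mpr
    have := mul_le_mul_of_nonneg_right haz hy
    linarith
  have h2 : fv * y ^ n * Real.exp (-(z.re * y)) ≤ (1 + y) * (y ^ n * Real.exp (-(a * y))) := by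
    have e1 : fv * y ^ n * Real.exp (-(z.re * y)) ≤ fv * y ^ n * Real.exp (-(a * y)) := by
      apply mul_le_mul_of_nonneg_left h1 (by positivity)
    have e2 : fv * y ^ n * Real.exp (-(a * y)) ≤ (1 + y) * y ^ n * Real.exp (-(a * y)) := by
      have := mul_le_mul_of_nonneg_right (mul_le_mul_of_nonneg_right hfb (pow_nonneg hy n))
        (Real.exp_pos (-(a * y))).le
      linarith
    calc fv * y ^ n * Real.exp (-(z.re * y)) ≤ fv * y ^ n * Real.exp (-(a * y)) := e1
      _ ≤ (1 + y) * y ^ n * Real.exp (-(a * y)) := e2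
      _ = (1 + y) * (y ^ n * Real.exp (-(a * y))) := by ring
  have h3 : (1 + y) * (y ^ n * Real.exp (-(a * y)))
      = y ^ n * Real.exp (-(a * y)) + y ^ (n + 1) * Real.exp (-(a * y)) := by ring
  calc fv * y ^ n * Real.exp (-(z.re * y)) ≤ (1 + y) * (y ^ n * Real.exp (-(a * y))) := h2
    _ = y ^ n * Real.exp (-(a * y)) + y ^ (n + 1) * Real.exp (-(a * y)) := h3
    _ ≤ n.factorial / a ^ n + (n + 1).factorial / a ^ (n + 1) :=
        add_le_add (cm_bound_aux ha hy n) (cm_bound_aux ha hy (n + 1))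

section master
variable {Ω : Type*} [MeasurableSpace Ω] {μ : Measure Ω} [IsProbabilityMeasure μ]
variable {Y f : Ω → ℝ}

lemma cm_meas (hY : Measurable Y) (hf : Measurable f) (z : ℂ) (n : ℕ) :
    AEStronglyMeasurable (fun ω => (f ω : ℂ) * (Y ω : ℂ) ^ n * Complex.exp (-(z * Y ω))) μ := by
  apply Measurable.aestronglyMeasurable
  exact ((Complex.measurable_ofReal.comp hf).mul
      ((Complex.measurable_ofReal.comp hY).pow_const n)).mul
    (Complex.measurable_exp.comp (((Complex.measurable_ofReal.comp hY).const_mul z).neg))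

lemma cm_integrable (hY : Measurable Y) (hf : Measurable f)
    (hY0 : ∀ᵐ ω ∂μ, 0 ≤ Y ω) (hfb : ∀ᵐ ω ∂μ, 0 ≤ f ω ∧ f ω ≤ 1 + Y ω)
    {z : ℂ} (hz : 0 < z.re) (n : ℕ) :
    Integrable (fun ω => (f ω : ℂ) * (Y ω : ℂ) ^ n * Complex.exp (-(z * Y ω))) μ := by
  refine Integrable.mono' (integrable_const (n.factorial / z.re ^ n
    + (n + 1).factorial / z.re ^ (n + 1))) (cm_meas hY hf z n) ?_
  filter_upwards [hY0, hfb] with ω h1 h2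
  exact cm_norm_integrand hz le_rfl n h1 h2.1 h2.2

lemma cm_hasDerivAt (hY : Measurable Y) (hf : Measurable f)
    (hY0 : ∀ᵐ ω ∂μ, 0 ≤ Y ω) (hfb : ∀ᵐ ω ∂μ, 0 ≤ f ω ∧ f ω ≤ 1 + Y ω)
    {z₀ : ℂ} (hz : 0 < z₀.re) (n : ℕ) :
    HasDerivAt (fun z => ∫ ω, (f ω : ℂ) * (Y ω : ℂ) ^ n * Complex.exp (-(z * Y ω)) ∂μ)
      (-∫ ω, (f ω : ℂ) * (Y ω : ℂ) ^ (n + 1) * Complex.exp (-(z₀ * Y ω)) ∂μ) z₀ := by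
  set a : ℝ := z₀.re / 2 with ha_def
  have ha : 0 < a := by positivity
  have key := hasDerivAt_integral_of_dominated_loc_of_deriv_le (μ := μ) (s := ball z₀ a)
    (F := fun z ω => (f ω : ℂ) * (Y ω : ℂ) ^ n * Complex.exp (-(z * Y ω)))
    (F' := fun z ω => -((f ω : ℂ) * (Y ω : ℂ) ^ (n + 1) * Complex.exp (-(z * Y ω))))
    (x₀ := z₀)
    (bound := fun _ => (n + 1).factorial / a ^ (n + 1) + (n + 2).factorial / a ^ (n + 2))
    (ball_mem_nhds z₀ ha)
    (Eventually.of_forall fun z => cm_meas hY hf z n)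
    (cm_integrable hY hf hY0 hfb hz n)
    ((cm_meas hY hf z₀ (n + 1)).neg)
    ?_ (integrable_const _) ?_
  · have := key.2
    rwa [integral_neg] at this
  · filter_upwards [hY0, hfb] with ω h1 h2
    intro z hzball
    rw [norm_neg]
    have hre : a ≤ z.re := by
      have hd : dist z z₀ < a := mem_ball.mp hzball
      have : |(z - z₀).re| ≤ ‖z - z₀‖ := Complex.abs_re_le_norm _
      rw [Complex.sub_re] at this
      rw [Complex.dist_eq] at hd
      have h3 : |z.re - z₀.re| < a := lt_of_le_of_lt this hd
      have := abs_lt.mp h3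
      have : z₀.re - a < z.re := by linarith [this.1]
      linarith [this, ha_def ▸ (by linarith : z₀.re - z₀.re / 2 = z₀.re / 2)]
    exact cm_norm_integrand ha hre (n + 1) h1 h2.1 h2.2
  · apply Eventually.of_forall
    intro ω z _
    have h1 : HasDerivAt (fun z : ℂ => -(z * (Y ω : ℂ))) (-(Y ω : ℂ)) z := by
      simpa using ((hasDerivAt_id z).mul_const ((Y ω : ℂ))).fun_neg
    have h2 := h1.cexp
    have h3 := h2.const_mul ((f ω : ℂ) * (Y ω : ℂ) ^ n)
    convert h3 using 1
    show -((f ω : ℂ) * (Y ω : ℂ) ^ (n + 1) * Complex.exp (-(z * Y ω))) = _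
    rw [pow_succ]
    ring
    rfl

end master


section master
variable {Ω : Type*} [MeasurableSpace Ω] (μ : Measure Ω) [IsProbabilityMeasure μ]
variable (Y f : Ω → ℝ)

noncomputable def cmNC (n : ℕ) (z : ℂ) : ℂ :=
  ∫ ω, (f ω : ℂ) * (Y ω : ℂ) ^ n * Complex.exp (-(z * Y ω)) ∂μ

noncomputable def cmNR (n : ℕ) (s : ℝ) : ℝ :=
  ∫ ω, f ω * Y ω ^ n * Real.exp (-(s * Y ω)) ∂μ

lemma cm_NC_real (n : ℕ) (s : ℝ) : cmNC μ Y f n (s : ℂ) = ((cmNR μ Y f n s : ℝ) : ℂ) := by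
  rw [cmNC, cmNR]
  have h1 : ∀ ω, (f ω : ℂ) * (Y ω : ℂ) ^ n * Complex.exp (-((s : ℂ) * Y ω))
      = ((f ω * Y ω ^ n * Real.exp (-(s * Y ω)) : ℝ) : ℂ) := by
    intro ω
    push_cast [Complex.ofReal_exp]
    ring_nf
  simp_rw [h1]
  exact integral_ofReal

end master


section transfer
variable {Ω : Type*} [MeasurableSpace Ω] {μ : Measure Ω} [IsProbabilityMeasure μ]
variable {Y f : Ω → ℝ}

lemma cm_hasDerivAt_NC (hY : Measurable Y) (hf : Measurable f)
    (hY0 : ∀ᵐ ω ∂μ, 0 ≤ Y ω) (hfb : ∀ᵐ ω ∂μ, 0 ≤ f ω ∧ f ω ≤ 1 + Y ω)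
    {z₀ : ℂ} (hz : 0 < z₀.re) (n : ℕ) :
    HasDerivAt (cmNC μ Y f n) (-(cmNC μ Y f (n + 1) z₀)) z₀ :=
  cm_hasDerivAt hY hf hY0 hfb hz n

lemma cm_hasDerivAt_NR (hY : Measurable Y) (hf : Measurable f)
    (hY0 : ∀ᵐ ω ∂μ, 0 ≤ Y ω) (hfb : ∀ᵐ ω ∂μ, 0 ≤ f ω ∧ f ω ≤ 1 + Y ω)
    {s : ℝ} (hs : 0 < s) (n : ℕ) :
    HasDerivAt (cmNR μ Y f n) (-(cmNR μ Y f (n + 1) s)) s := by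
  have h := (cm_hasDerivAt_NC hY hf hY0 hfb (z₀ := (s : ℂ)) (by simpa using hs) n).real_of_complex
  have e1 : (fun x : ℝ => (cmNC μ Y f n ↑x).re) = cmNR μ Y f n := by
    funext x; rw [cm_NC_real]; simp
  have e2 : (-(cmNC μ Y f (n + 1) ↑s)).re = -(cmNR μ Y f (n + 1) s) := by
    rw [cm_NC_real]; simp
  rw [e1, e2] at h
  exact h

lemma cm_analyticNC (hY : Measurable Y) (hf : Measurable f)
    (hY0 : ∀ᵐ ω ∂μ, 0 ≤ Y ω) (hfb : ∀ᵐ ω ∂μ, 0 ≤ f ω ∧ f ω ≤ 1 + Y ω) (n : ℕ) :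
    AnalyticOnNhd ℂ (cmNC μ Y f n) {z : ℂ | 0 < z.re} := by
  apply DifferentiableOn.analyticOnNhd
  · intro z hz
    exact (cm_hasDerivAt_NC hY hf hY0 hfb hz n).differentiableAt.differentiableWithinAt
  · exact isOpen_lt continuous_const Complex.continuous_re

lemma cm_analyticNR (hY : Measurable Y) (hf : Measurable f)
    (hY0 : ∀ᵐ ω ∂μ, 0 ≤ Y ω) (hfb : ∀ᵐ ω ∂μ, 0 ≤ f ω ∧ f ω ≤ 1 + Y ω) (n : ℕ) :
    AnalyticOnNhd ℝ (cmNR μ Y f n) (Ioi (0 : ℝ)) := by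
  intro s hs
  have h1 : AnalyticAt ℝ (cmNC μ Y f n) (s : ℂ) :=
    ((cm_analyticNC hY hf hY0 hfb n) _ (by simpa using (mem_Ioi.mp hs))).restrictScalars
  have h2 : AnalyticAt ℝ (fun x : ℝ => cmNC μ Y f n (Complex.ofRealCLM x)) s :=
    h1.comp (Complex.ofRealCLM.analyticAt s)
  have h3 : AnalyticAt ℝ (fun x : ℝ => Complex.reCLM (cmNC μ Y f n (Complex.ofRealCLM x))) s :=
    (Complex.reCLM.analyticAt _).comp h2
  have e1 : cmNR μ Y f n = fun x : ℝ => Complex.reCLM (cmNC μ Y f n (Complex.ofRealCLM x)) := by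
    funext x
    rw [show (Complex.ofRealCLM x) = (x : ℂ) from rfl, cm_NC_real]
    simp
  rw [e1]
  exact h3

lemma cm_NR_nonneg (hY0 : ∀ᵐ ω ∂μ, 0 ≤ Y ω) (hfb : ∀ᵐ ω ∂μ, 0 ≤ f ω ∧ f ω ≤ 1 + Y ω)
    (n : ℕ) (s : ℝ) : 0 ≤ cmNR μ Y f n s := by
  apply integral_nonneg_of_ae
  filter_upwards [hY0, hfb] with ω h1 h2
  exact mul_nonneg (mul_nonneg h2.1 (pow_nonneg h1 n)) (Real.exp_pos _).le

lemma cm_NR_integrable (hY : Measurable Y) (hf : Measurable f)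
    (hY0 : ∀ᵐ ω ∂μ, 0 ≤ Y ω) (hfb : ∀ᵐ ω ∂μ, 0 ≤ f ω ∧ f ω ≤ 1 + Y ω)
    {s : ℝ} (hs : 0 < s) (n : ℕ) :
    Integrable (fun ω => f ω * Y ω ^ n * Real.exp (-(s * Y ω))) μ := by
  have h := (cm_integrable hY hf hY0 hfb (z := (s : ℂ)) (by simpa using hs) n).re
  apply h.congr
  apply Eventually.of_forall
  intro ω
  have : (f ω : ℂ) * (Y ω : ℂ) ^ n * Complex.exp (-((s : ℂ) * Y ω))
      = ((f ω * Y ω ^ n * Real.exp (-(s * Y ω)) : ℝ) : ℂ) := by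
    push_cast [Complex.ofReal_exp]
    ring_nf
  show RCLike.re ((f ω : ℂ) * (Y ω : ℂ) ^ n * Complex.exp (-((s : ℂ) * Y ω))) = _
  rw [RCLike.re_to_complex, this, Complex.ofReal_re]


end transfer

/-- The function `w(s) = -e^s g'(s)/(1-g(s))`, where `g` is the Laplace transform of a
random variable `Z ≥ 1`, is completely monotone on `(0,∞)`. -/
theorem stmt0 {Ω : Type*} [MeasurableSpace Ω] (μ : Measure Ω) [IsProbabilityMeasure μ]
    (Z : Ω → ℝ) (hZmeas : Measurable Z) (hZ : ∀ᵐ ω ∂μ, 1 ≤ Z ω)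
    (g w : ℝ → ℝ)
    (hg : ∀ s, g s = ∫ ω, Real.exp (-s * Z ω) ∂μ)
    (hw : ∀ s, w s = -Real.exp s * deriv g s / (1 - g s)) :
    ContDiffOn ℝ (⊤ : ℕ∞) w (Set.Ioi 0) ∧
      ∀ (n : ℕ) (x : ℝ), 0 < x → 0 ≤ (-1 : ℝ) ^ n * iteratedDeriv n w x := by
  classical
  set G : ℕ → ℝ → ℝ := cmNR μ Z (fun _ => (1 : ℝ)) with hG_def
  set H : ℕ → ℝ → ℝ := cmNR μ (fun ω => Z ω - 1) Z with hH_def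
  have hY0G : ∀ᵐ ω ∂μ, 0 ≤ Z ω := hZ.mono fun ω h => by linarith
  have hfbG : ∀ᵐ ω ∂μ, 0 ≤ (fun _ : Ω => (1 : ℝ)) ω ∧ (fun _ : Ω => (1 : ℝ)) ω ≤ 1 + Z ω :=
    hZ.mono fun ω h => ⟨zero_le_one, show (1:ℝ) ≤ 1 + Z ω by linarith⟩
  have hY0H : ∀ᵐ ω ∂μ, 0 ≤ (fun ω => Z ω - 1) ω := hZ.mono fun ω h => by simpa using h
  have hfbH : ∀ᵐ ω ∂μ, 0 ≤ Z ω ∧ Z ω ≤ 1 + (fun ω => Z ω - 1) ω :=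
    hZ.mono fun ω h => ⟨by linarith, by simp⟩
  have hYmeasH : Measurable (fun ω => Z ω - 1) := hZmeas.sub measurable_const
  have hGderiv : ∀ n, ∀ x ∈ Ioi (0:ℝ), HasDerivAt (G n) (-(G (n + 1) x)) x := fun n x hx =>
    cm_hasDerivAt_NR hZmeas measurable_const hY0G hfbG (mem_Ioi.mp hx) n
  have hHderiv : ∀ n, ∀ x ∈ Ioi (0:ℝ), HasDerivAt (H n) (-(H (n + 1) x)) x := fun n x hx =>
    cm_hasDerivAt_NR hYmeasH hZmeas hY0H hfbH (mem_Ioi.mp hx) n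
  have hGanal : ∀ n, AnalyticOnNhd ℝ (G n) (Ioi (0:ℝ)) := fun n =>
    cm_analyticNR hZmeas measurable_const hY0G hfbG n
  have hHanal : ∀ n, AnalyticOnNhd ℝ (H n) (Ioi (0:ℝ)) := fun n =>
    cm_analyticNR hYmeasH hZmeas hY0H hfbH n
  have hGpos : ∀ n s, 0 ≤ G n s := fun n s => cm_NR_nonneg hY0G hfbG n s
  have hHpos : ∀ n s, 0 ≤ H n s := fun n s => cm_NR_nonneg hY0H hfbH n s
  have hgG : g = G 0 := by
    funext s
    rw [hg]
    show _ = ∫ ω, (1 : ℝ) * Z ω ^ 0 * Real.exp (-(s * Z ω)) ∂μ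
    apply integral_congr_ae
    apply Eventually.of_forall
    intro ω
    simp [neg_mul]
  set v : ℝ → ℝ := fun s => 1 - G 0 s with hv_def
  have hvpos : ∀ x ∈ Ioi (0:ℝ), 0 < v x := by
    intro x hx
    have hx0 := mem_Ioi.mp hx
    have hle : G 0 x ≤ Real.exp (-x) := by
      have h1 : G 0 x = ∫ ω, (1 : ℝ) * Z ω ^ 0 * Real.exp (-(x * Z ω)) ∂μ := rfl
      rw [h1]
      have h2 : (∫ _ : Ω, Real.exp (-x) ∂μ) = Real.exp (-x) := by simp
      rw [← h2]
      apply integral_mono_ae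
        (cm_NR_integrable hZmeas measurable_const hY0G hfbG hx0 0) (integrable_const _)
      filter_upwards [hZ] with ω h
      have : x * 1 ≤ x * Z ω := mul_le_mul_of_nonneg_left h hx0.le
      simp only [pow_zero, one_mul, mul_one]
      apply Real.exp_le_exp.mpr
      linarith
    have : Real.exp (-x) < 1 := by
      have := Real.exp_lt_exp.mpr (neg_lt_zero.mpr hx0)
      rwa [Real.exp_zero] at this
    have : G 0 x < 1 := lt_of_le_of_lt hle this
    simp only [hv_def]
    linarith
  have hderivg : ∀ x ∈ Ioi (0:ℝ), deriv g x = -(G 1 x) := by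
    intro x hx
    rw [hgG]
    exact (hGderiv 0 x hx).deriv
  have hH0 : ∀ s, H 0 s = Real.exp s * G 1 s := by
    intro s
    have h1 : G 1 s = ∫ ω, (1 : ℝ) * Z ω ^ 1 * Real.exp (-(s * Z ω)) ∂μ := rfl
    have h2 : H 0 s = ∫ ω, Z ω * (Z ω - 1) ^ 0 * Real.exp (-(s * (Z ω - 1))) ∂μ := rfl
    rw [h1, h2, ← integral_const_mul]
    apply integral_congr_ae
    apply Eventually.of_forall
    intro ω
    simp only [pow_zero, mul_one, pow_one, one_mul]
    rw [show -(s * (Z ω - 1)) = s + -(s * Z ω) by ring, Real.exp_add]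
    ring
  set W : ℝ → ℝ := fun s => H 0 s / v s with hW_def
  have hEq : Set.EqOn w W (Ioi 0) := by
    intro s hs
    have hvne := (hvpos s hs).ne'
    show w s = H 0 s / v s
    rw [hw, hderivg s hs]
    have hnum : -Real.exp s * -(G 1 s) = H 0 s := by rw [hH0 s]; ring
    rw [hgG]
    show -Real.exp s * -(G 1 s) / (1 - G 0 s) = H 0 s / (1 - G 0 s)
    rw [hnum]
  have hvanal : AnalyticOnNhd ℝ v (Ioi (0:ℝ)) := by
    have := analyticOnNhd_const (v := (1:ℝ)) (s := Ioi (0:ℝ)) (𝕜 := ℝ)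
    exact this.sub (hGanal 0)
  have hWanal : AnalyticOnNhd ℝ W (Ioi (0:ℝ)) :=
    (hHanal 0).div hvanal (fun x hx => (hvpos x hx).ne')
  have part1 : ContDiffOn ℝ (⊤ : ℕ∞) w (Set.Ioi 0) :=
    (hWanal.contDiffOn isOpen_Ioi.uniqueDiffOn).congr hEq
  refine ⟨part1, ?_⟩
  -- iterated derivative formulas
  have hdiffW : ∀ k, ∀ y ∈ Ioi (0:ℝ), DifferentiableAt ℝ (iteratedDeriv k W) y := fun k y hy =>
    ((cm_analytic_iteratedDeriv isOpen_Ioi hWanal k) y hy).differentiableAt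
  have hdiffv : ∀ k, ∀ y ∈ Ioi (0:ℝ), DifferentiableAt ℝ (iteratedDeriv k v) y := fun k y hy =>
    ((cm_analytic_iteratedDeriv isOpen_Ioi hvanal k) y hy).differentiableAt
  have hHiter : ∀ m, ∀ y ∈ Ioi (0:ℝ), iteratedDeriv m (H 0) y = (-1 : ℝ) ^ m * H m y :=
    cm_chainIter isOpen_Ioi hHderiv (fun _ _ => rfl)
  set Fv : ℕ → ℝ → ℝ := fun k => if k = 0 then v else fun t => -(G k t) with hFv_def
  have hFvderiv : ∀ k, ∀ y ∈ Ioi (0:ℝ), HasDerivAt (Fv k) (-(Fv (k + 1) y)) y := by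
    intro k y hy
    match k with
    | 0 =>
      have h := (hGderiv 0 y hy).const_sub 1
      have e1 : Fv 0 = v := by simp [hFv_def]
      have e2 : Fv 1 y = -(G 1 y) := by simp [hFv_def]
      rw [e1, e2, neg_neg]
      simpa using h
    | (k + 1) =>
      have h := (hGderiv (k + 1) y hy).fun_neg
      have e1 : Fv (k + 1) = fun t => -(G (k + 1) t) := by simp [hFv_def]
      have e2 : Fv (k + 2) y = -(G (k + 2) y) := by simp [hFv_def]
      rw [e1, e2, neg_neg]
      simpa using h
  have hviter : ∀ m, ∀ y ∈ Ioi (0:ℝ), iteratedDeriv m v y = (-1 : ℝ) ^ m * Fv m y :=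
    cm_chainIter isOpen_Ioi hFvderiv (fun y hy => by simp [hFv_def])
  -- the main induction
  have main : ∀ n, ∀ x ∈ Ioi (0:ℝ), 0 ≤ (-1 : ℝ) ^ n * iteratedDeriv n W x := by
    intro n
    induction n using Nat.strong_induction_on with
    | _ n ih =>
      intro x hx
      have hID : iteratedDeriv n (fun y => W y * v y) x = (-1 : ℝ) ^ n * H n x := by
        have e : Set.EqOn (fun y => W y * v y) (H 0) (Ioi 0) := by
          intro y hy
          show W y * v y = H 0 y
          rw [hW_def]
          exact div_mul_cancel₀ _ (hvpos y hy).ne'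
        rw [e.iteratedDeriv_of_isOpen isOpen_Ioi n hx, hHiter n x hx]
      have hleib := cm_leibniz isOpen_Ioi hdiffW hdiffv n x hx
      rw [hID, Finset.sum_range_succ] at hleib
      simp only [Nat.choose_self, Nat.cast_one, Nat.sub_self, iteratedDeriv_zero, one_mul]
        at hleib
      have key : ((-1 : ℝ) ^ n * iteratedDeriv n W x) * v x
          = H n x + ∑ k ∈ Finset.range n,
              (n.choose k : ℝ) * (((-1 : ℝ) ^ k * iteratedDeriv k W x) * G (n - k) x) := by
        have hterm : ∀ k ∈ Finset.range n,
            (-1 : ℝ) ^ n * ((n.choose k : ℝ) * (iteratedDeriv k W x * iteratedDeriv (n - k) v x))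
            = -((n.choose k : ℝ) * (((-1 : ℝ) ^ k * iteratedDeriv k W x) * G (n - k) x)) := by
          intro k hk
          have hklt := Finset.mem_range.mp hk
          have h1 : iteratedDeriv (n - k) v x = (-1 : ℝ) ^ (n - k) * (-(G (n - k) x)) := by
            rw [hviter (n - k) x hx]
            congr 1
            have : n - k ≠ 0 := Nat.sub_ne_zero_of_lt hklt
            simp [hFv_def, this]
          have h2 : (-1 : ℝ) ^ n = (-1 : ℝ) ^ k * (-1 : ℝ) ^ (n - k) := by
            rw [← pow_add, Nat.add_sub_cancel' hklt.le]
          have h3 : ((-1 : ℝ) ^ (n - k)) * ((-1 : ℝ) ^ (n - k)) = 1 := by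
            rw [← pow_add]
            exact Even.neg_one_pow ⟨n - k, rfl⟩
          rw [h1, h2]
          linear_combination (-((n.choose k : ℝ) * iteratedDeriv k W x * G (n - k) x
            * (-1 : ℝ) ^ k)) * h3
        have hmul := congrArg (fun t => (-1 : ℝ) ^ n * t) hleib
        rw [mul_add, Finset.mul_sum] at hmul
        rw [Finset.sum_congr rfl hterm] at hmul
        have h4 : (-1 : ℝ) ^ n * ((-1 : ℝ) ^ n * H n x) = H n x := by
          rw [← mul_assoc, ← pow_add, Even.neg_one_pow ⟨n, rfl⟩, one_mul]
        rw [h4, Finset.sum_neg_distrib] at hmul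
        linear_combination (-1 : ℝ) * hmul
      have hpos : 0 ≤ H n x + ∑ k ∈ Finset.range n,
          (n.choose k : ℝ) * (((-1 : ℝ) ^ k * iteratedDeriv k W x) * G (n - k) x) := by
        apply add_nonneg (hHpos n x)
        apply Finset.sum_nonneg
        intro k hk
        have hklt := Finset.mem_range.mp hk
        exact mul_nonneg (Nat.cast_nonneg _)
          (mul_nonneg (ih k hklt x hx) (hGpos (n - k) x))
      rw [← key] at hpos
      exact (mul_nonneg_iff_of_pos_right (hvpos x hx)).mp hpos
  intro n x hx
  have hxI : x ∈ Ioi (0:ℝ) := mem_Ioi.mpr hx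
  rw [hEq.iteratedDeriv_of_isOpen isOpen_Ioi n hxI]
  exact main n x hxI
end

section
/- For every n ≥ 1 and every bounded function g : (0,∞) → (0,∞), the sum over all permutations σ of {1,…,n} of the product ∏_{i=1}^{n} g(s_{σ(i)}) / (Σ_{j=i}^{n} g(s_{σ(j)})) equals 1, for any fixed s_1, …, s_n ∈ (0,∞). -/
open Finset

lemma key (n : ℕ) (w : Fin n → ℝ) (hw : ∀ i, 0 < w i) :
    ∑ σ : Equiv.Perm (Fin n),
      ∏ i : Fin n,
        w (σ i) / (∑ j ∈ Finset.univ.filter (fun j : Fin n => i ≤ j), w (σ j)) = 1 := by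
  induction n with
  | zero => simp
  | succ n ih =>
    have hW : (0:ℝ) < ∑ x : Fin (n+1), w x :=
      Finset.sum_pos (fun i _ => hw i) univ_nonempty
    rw [← Equiv.sum_comp (Equiv.Perm.decomposeFin (n := n)).symm]
    rw [Fintype.sum_prod_type]
    have hterm : ∀ (p : Fin (n+1)) (e : Equiv.Perm (Fin n)),
        (∏ i : Fin (n+1),
          w ((Equiv.Perm.decomposeFin.symm (p, e)) i) /
            (∑ j ∈ Finset.univ.filter (fun j : Fin (n+1) => i ≤ j),
              w ((Equiv.Perm.decomposeFin.symm (p, e)) j)))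
        = (w p / ∑ x : Fin (n+1), w x) *
          ∏ i : Fin n,
            (fun m => w (Equiv.swap 0 p m.succ)) (e i) /
              (∑ j ∈ Finset.univ.filter (fun j : Fin n => i ≤ j),
                (fun m => w (Equiv.swap 0 p m.succ)) (e j)) := by
      intro p e
      set σ := Equiv.Perm.decomposeFin.symm (p, e) with hσ
      rw [Fin.prod_univ_succ]
      congr 1
      · congr 1
        · simp [σ, Equiv.Perm.decomposeFin_symm_apply_zero]
        · rw [Finset.filter_true_of_mem (fun j _ => Fin.zero_le j)]
          exact Equiv.sum_comp σ w
      · apply Finset.prod_congr rfl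
        intro i _
        congr 1
        · simp [σ, Equiv.Perm.decomposeFin_symm_apply_succ]
        · rw [Finset.sum_filter, Finset.sum_filter, Fin.sum_univ_succ]
          simp [Fin.succ_le_succ_iff, Fin.le_zero_iff, Fin.succ_ne_zero, σ, Equiv.Perm.decomposeFin_symm_apply_succ]
    calc ∑ p : Fin (n+1), ∑ e : Equiv.Perm (Fin n),
          (∏ i : Fin (n+1),
            w ((Equiv.Perm.decomposeFin.symm (p, e)) i) /
              (∑ j ∈ Finset.univ.filter (fun j : Fin (n+1) => i ≤ j),
                w ((Equiv.Perm.decomposeFin.symm (p, e)) j)))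
        = ∑ p : Fin (n+1), (w p / ∑ x : Fin (n+1), w x) * 1 := by
          apply Finset.sum_congr rfl
          intro p _
          simp only [hterm p]
          rw [← Finset.mul_sum]
          congr 1
          exact ih (fun m => w (Equiv.swap 0 p m.succ)) (fun m => hw _)
      _ = 1 := by
          simp only [mul_one]
          rw [← Finset.sum_div]
          field_simp

/-- Sum over all permutations of `∏ᵢ g(s_{σ(i)}) / Σ_{j≥i} g(s_{σ(j)})` equals 1. -/
theorem stmt3 (n : ℕ) (hn : 1 ≤ n) (s : Fin n → ℝ) (hs : ∀ i, 0 < s i)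
    (g : ℝ → ℝ) (hgpos : ∀ x : ℝ, 0 < x → 0 < g x)
    (hgbdd : ∃ M : ℝ, ∀ x : ℝ, 0 < x → g x ≤ M) :
    ∑ σ : Equiv.Perm (Fin n),
      ∏ i : Fin n,
        g (s (σ i)) / (∑ j ∈ Finset.univ.filter (fun j : Fin n => i ≤ j), g (s (σ j))) = 1 := by
  exact key n (fun i => g (s i)) (fun i => hgpos _ (hs i))
end

section
/- For any s_1,…,s_k ∈ (0,∞), any positive function g on (0,∞), and k ≥ 2: Σ_{σ ∈ S_k} (g(s_{σ(1)})/(g(s_1)+⋯+g(s_k))) · ∏_{i=2}^{k-1} (g(s_{σ(i)})/(Σ_{j=i}^{k-1} g(s_{σ(j)}))) = k - 1. -/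
open Finset Equiv
set_option maxHeartbeats 1000000


private lemma filter_sum_succ {m : ℕ} (P : Fin (m+1) → Prop) [DecidablePred P] (h0 : ¬ P 0)
    (f : Fin (m+1) → ℝ) :
    ∑ j ∈ univ.filter P, f j = ∑ j ∈ univ.filter (fun j : Fin m => P j.succ), f j.succ := by
  rw [Finset.sum_filter, Finset.sum_filter, Fin.sum_univ_succ, if_neg h0, zero_add]

private lemma filter_prod_succ {m : ℕ} (P : Fin (m+1) → Prop) [DecidablePred P] (h0 : ¬ P 0)
    (f : Fin (m+1) → ℝ) :
    ∏ j ∈ univ.filter P, f j = ∏ j ∈ univ.filter (fun j : Fin m => P j.succ), f j.succ := by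
  rw [Finset.prod_filter, Finset.prod_filter, Fin.prod_univ_succ, if_neg h0, one_mul]

private lemma filter_sum_rev {m : ℕ} (P : Fin m → Prop) [DecidablePred P] (f : Fin m → ℝ) :
    ∑ j ∈ univ.filter P, f j = ∑ j ∈ univ.filter (fun j : Fin m => P j.rev), f j.rev := by
  rw [Finset.sum_filter, Finset.sum_filter]
  exact (Fintype.sum_equiv Fin.revPerm
    (fun j => if P j.rev then f j.rev else 0)
    (fun j => if P j then f j else 0) (fun j => by simp)).symm

private lemma filter_prod_rev {m : ℕ} (P : Fin m → Prop) [DecidablePred P] (f : Fin m → ℝ) :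
    ∏ j ∈ univ.filter P, f j = ∏ j ∈ univ.filter (fun j : Fin m => P j.rev), f j.rev := by
  rw [Finset.prod_filter, Finset.prod_filter]
  exact (Fintype.prod_equiv Fin.revPerm
    (fun j => if P j.rev then f j.rev else 1)
    (fun j => if P j then f j else 1) (fun j => by simp)).symm

private lemma L1 : ∀ (m : ℕ) (a : Fin m → ℝ), (∀ i, 0 < a i) →
    ∑ τ : Perm (Fin m), ∏ i : Fin m,
      a (τ i) / ∑ j ∈ univ.filter (fun j => i ≤ j), a (τ j) = 1 := by
  intro m
  induction m with
  | zero => intro a ha; simp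
  | succ n ih =>
    intro a ha
    have hS : (0:ℝ) < ∑ j, a j := Finset.sum_pos (fun j _ => ha j) ⟨0, mem_univ 0⟩
    have h1 := Equiv.sum_comp (Equiv.Perm.decomposeFin (n := n)).symm
      (fun τ : Perm (Fin (n+1)) => ∏ i : Fin (n+1),
        a (τ i) / ∑ j ∈ univ.filter (fun j => i ≤ j), a (τ j))
    rw [← h1, Fintype.sum_prod_type]
    have key : ∀ (p : Fin (n+1)) (e : Perm (Fin n)),
        (∏ i : Fin (n+1), a ((Equiv.Perm.decomposeFin.symm (p, e)) i) /
          ∑ j ∈ univ.filter (fun j => i ≤ j), a ((Equiv.Perm.decomposeFin.symm (p, e)) j))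
        = (a p / ∑ j, a j) *
          ∏ i : Fin n, a (Equiv.swap 0 p (e i).succ) /
            ∑ j ∈ univ.filter (fun j => i ≤ j), a (Equiv.swap 0 p (e j).succ) := by
      intro p e
      rw [Fin.prod_univ_succ]
      congr 1
      · rw [Equiv.Perm.decomposeFin_symm_apply_zero]
        congr 1
        rw [show univ.filter (fun j : Fin (n+1) => (0:Fin (n+1)) ≤ j) = univ from by
          simp [Finset.filter_true_of_mem, Fin.zero_le]]
        exact Equiv.sum_comp _ a
      · refine Finset.prod_congr rfl fun i _ => ?_
        rw [Equiv.Perm.decomposeFin_symm_apply_succ]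
        congr 1
        rw [filter_sum_succ (fun j => i.succ ≤ j) (by simp [Fin.le_def])]
        refine Finset.sum_congr ?_ fun j hj => by
          rw [Equiv.Perm.decomposeFin_symm_apply_succ]
        apply Finset.filter_congr
        intro j _
        simp [Fin.succ_le_succ_iff]
    calc ∑ p : Fin (n+1), ∑ e : Perm (Fin n), _ = ∑ p : Fin (n+1), (a p / ∑ j, a j) := by
          refine Finset.sum_congr rfl fun p _ => ?_
          rw [show (∑ e : Perm (Fin n), _) = ∑ e : Perm (Fin n),
            ((a p / ∑ j, a j) * ∏ i : Fin n, a (Equiv.swap 0 p (e i).succ) /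
              ∑ j ∈ univ.filter (fun j => i ≤ j), a (Equiv.swap 0 p (e j).succ))
            from Finset.sum_congr rfl fun e _ => key p e]
          rw [← Finset.mul_sum, ih (fun x => a (Equiv.swap 0 p x.succ)) (fun x => ha _), mul_one]
      _ = 1 := by rw [← Finset.sum_div, div_self hS.ne']


private lemma L1' (m : ℕ) (a : Fin m → ℝ) (ha : ∀ i, 0 < a i) :
    ∑ τ : Perm (Fin m), ∏ i : Fin m,
      a (τ i) / ∑ j ∈ univ.filter (fun j => j ≤ i), a (τ j) = 1 := by
  have h1 := Equiv.sum_comp (Equiv.mulRight (Fin.revPerm (n := m)))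
      (fun τ : Perm (Fin m) => ∏ i : Fin m,
        a (τ i) / ∑ j ∈ univ.filter (fun j => j ≤ i), a (τ j))
  rw [← h1, ← L1 m a ha]
  refine Finset.sum_congr rfl fun σ _ => ?_
  simp only [Equiv.coe_mulRight, Equiv.Perm.mul_apply, Fin.revPerm_apply]
  have hden : ∀ i : Fin m, ∑ j ∈ univ.filter (fun j => j ≤ i), a (σ j.rev)
      = ∑ j ∈ univ.filter (fun j => i.rev ≤ j), a (σ j) := by
    intro i
    rw [filter_sum_rev (fun j => i.rev ≤ j) (fun j => a (σ j))]
    refine Finset.sum_congr ?_ fun _ _ => rfl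
    apply Finset.filter_congr
    intro j _
    simp [Fin.rev_le_rev]
  calc (∏ i : Fin m, a (σ i.rev) / ∑ j ∈ univ.filter (fun j => j ≤ i), a (σ j.rev))
      = ∏ i : Fin m, a (σ i.rev) / ∑ j ∈ univ.filter (fun j => i.rev ≤ j), a (σ j) := by
        exact Finset.prod_congr rfl fun i _ => by rw [hden i]
    _ = ∏ i : Fin m, a (σ i) / ∑ j ∈ univ.filter (fun j => i ≤ j), a (σ j) := by
        have := Equiv.prod_comp (Fin.revPerm (n := m))
          (fun i => a (σ i) / ∑ j ∈ univ.filter (fun j => i ≤ j), a (σ j))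
        simpa using this


private lemma L2 (m : ℕ) (a : Fin (m+2) → ℝ) (ha : ∀ i, 0 < a i) :
    ∑ σ : Perm (Fin (m+2)),
      (a (σ 0) / ∑ j, a j) *
        ∏ i ∈ univ.filter (fun i : Fin (m+2) => 1 ≤ i.val ∧ i.val ≤ m),
          a (σ i) / (∑ j ∈ univ.filter (fun j : Fin (m+2) => i.val ≤ j.val ∧ j.val ≤ m), a (σ j))
      = (m:ℝ) + 1 := by
  have hS : (0:ℝ) < ∑ j, a j := Finset.sum_pos (fun j _ => ha j) ⟨0, mem_univ 0⟩
  -- Step A: reverse positions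
  have hA := Equiv.sum_comp (Equiv.mulRight (Fin.revPerm (n := m+2)))
      (fun σ : Perm (Fin (m+2)) => (a (σ 0) / ∑ j, a j) *
        ∏ i ∈ univ.filter (fun i : Fin (m+2) => 1 ≤ i.val ∧ i.val ≤ m),
          a (σ i) / (∑ j ∈ univ.filter (fun j : Fin (m+2) => i.val ≤ j.val ∧ j.val ≤ m), a (σ j)))
  rw [← hA]
  -- Step B: each reversed summand
  have hB : ∀ ρ : Perm (Fin (m+2)),
      (a ((ρ * Fin.revPerm : Perm (Fin (m+2))) 0) / ∑ j, a j) *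
        ∏ i ∈ univ.filter (fun i : Fin (m+2) => 1 ≤ i.val ∧ i.val ≤ m),
          a ((ρ * Fin.revPerm : Perm (Fin (m+2))) i) /
            (∑ j ∈ univ.filter (fun j : Fin (m+2) => i.val ≤ j.val ∧ j.val ≤ m),
              a ((ρ * Fin.revPerm : Perm (Fin (m+2))) j))
      = (a (ρ (Fin.last (m+1))) / ∑ j, a j) *
        ∏ i ∈ univ.filter (fun i : Fin (m+2) => 1 ≤ i.val ∧ i.val ≤ m),
          a (ρ i) /
            (∑ j ∈ univ.filter (fun j : Fin (m+2) => 1 ≤ j.val ∧ j.val ≤ i.val), a (ρ j)) := by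
    intro ρ
    simp only [Equiv.coe_mulRight, Equiv.Perm.mul_apply, Fin.revPerm_apply, Fin.rev_zero]
    congr 1
    have hden : ∀ i : Fin (m+2),
        (∑ j ∈ univ.filter (fun j : Fin (m+2) => i.val ≤ j.val ∧ j.val ≤ m), a (ρ j.rev))
        = ∑ j ∈ univ.filter (fun j : Fin (m+2) => i.val ≤ j.rev.val ∧ j.rev.val ≤ m), a (ρ j) := by
      intro i
      rw [filter_sum_rev (fun j : Fin (m+2) => i.val ≤ j.rev.val ∧ j.rev.val ≤ m)
        (fun j => a (ρ j))]
      refine Finset.sum_congr ?_ fun _ _ => rfl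
      apply Finset.filter_congr
      intro j _
      simp [Fin.rev_rev]
    calc ∏ i ∈ univ.filter (fun i : Fin (m+2) => 1 ≤ i.val ∧ i.val ≤ m),
            a (ρ i.rev) /
              (∑ j ∈ univ.filter (fun j : Fin (m+2) => i.val ≤ j.val ∧ j.val ≤ m), a (ρ j.rev))
        = ∏ i ∈ univ.filter (fun i : Fin (m+2) => 1 ≤ i.val ∧ i.val ≤ m),
            a (ρ i.rev) /
              (∑ j ∈ univ.filter (fun j : Fin (m+2) => i.val ≤ j.rev.val ∧ j.rev.val ≤ m),
                a (ρ j)) :=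
          Finset.prod_congr rfl fun i _ => by rw [hden i]
      _ = ∏ i ∈ univ.filter (fun i : Fin (m+2) => 1 ≤ i.rev.val ∧ i.rev.val ≤ m),
            a (ρ i) /
              (∑ j ∈ univ.filter (fun j : Fin (m+2) => i.rev.val ≤ j.rev.val ∧ j.rev.val ≤ m),
                a (ρ j)) := by
          rw [filter_prod_rev (fun i : Fin (m+2) => 1 ≤ i.val ∧ i.val ≤ m)]
          exact Finset.prod_congr rfl fun i _ => by rw [Fin.rev_rev]
      _ = ∏ i ∈ univ.filter (fun i : Fin (m+2) => 1 ≤ i.val ∧ i.val ≤ m),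
            a (ρ i) /
              (∑ j ∈ univ.filter (fun j : Fin (m+2) => 1 ≤ j.val ∧ j.val ≤ i.val), a (ρ j)) := by
          refine Finset.prod_congr ?_ fun i _ => ?_
          · apply Finset.filter_congr
            intro i _
            have := i.isLt
            simp only [Fin.val_rev]
            omega
          · congr 1
            refine Finset.sum_congr ?_ fun _ _ => rfl
            apply Finset.filter_congr
            intro j _
            have := i.isLt
            have := j.isLt
            simp only [Fin.val_rev]
            omega
  simp only [Equiv.coe_mulRight]
  rw [Finset.sum_congr rfl fun ρ _ => hB ρ]
  -- Step C: decompose at position 0 (old last position)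
  have hC := Equiv.sum_comp (Equiv.Perm.decomposeFin (n := m+1)).symm
      (fun ρ : Perm (Fin (m+2)) => (a (ρ (Fin.last (m+1))) / ∑ j, a j) *
        ∏ i ∈ univ.filter (fun i : Fin (m+2) => 1 ≤ i.val ∧ i.val ≤ m),
          a (ρ i) /
            (∑ j ∈ univ.filter (fun j : Fin (m+2) => 1 ≤ j.val ∧ j.val ≤ i.val), a (ρ j)))
  rw [← hC, Fintype.sum_prod_type]
  have hinner : ∀ v : Fin (m+2),
      (∑ τ : Perm (Fin (m+1)),
        (a ((Equiv.Perm.decomposeFin.symm (v, τ)) (Fin.last (m+1))) / ∑ j, a j) *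
        ∏ i ∈ univ.filter (fun i : Fin (m+2) => 1 ≤ i.val ∧ i.val ≤ m),
          a ((Equiv.Perm.decomposeFin.symm (v, τ)) i) /
            (∑ j ∈ univ.filter (fun j : Fin (m+2) => 1 ≤ j.val ∧ j.val ≤ i.val),
              a ((Equiv.Perm.decomposeFin.symm (v, τ)) j)))
      = ((∑ j, a j) - a v) / (∑ j, a j) := by
    intro v
    set b : Fin (m+1) → ℝ := fun x => a (Equiv.swap 0 v x.succ) with hbdef
    have hb : ∀ x, 0 < b x := fun x => ha _
    have hSb : (∑ x, b x) = (∑ j, a j) - a v := by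
      have h := Equiv.sum_comp (Equiv.swap (0 : Fin (m+2)) v) a
      rw [Fin.sum_univ_succ, Equiv.swap_apply_left] at h
      linarith
    have hSbpos : (0:ℝ) < ∑ x, b x := Finset.sum_pos (fun j _ => hb j) ⟨0, mem_univ 0⟩
    -- rewrite each τ-summand
    have hterm : ∀ τ : Perm (Fin (m+1)),
        (a ((Equiv.Perm.decomposeFin.symm (v, τ)) (Fin.last (m+1))) / ∑ j, a j) *
        ∏ i ∈ univ.filter (fun i : Fin (m+2) => 1 ≤ i.val ∧ i.val ≤ m),
          a ((Equiv.Perm.decomposeFin.symm (v, τ)) i) /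
            (∑ j ∈ univ.filter (fun j : Fin (m+2) => 1 ≤ j.val ∧ j.val ≤ i.val),
              a ((Equiv.Perm.decomposeFin.symm (v, τ)) j))
        = (b (τ (Fin.last m)) / ∑ j, a j) *
          ∏ i ∈ univ.filter (fun i : Fin (m+1) => i.val < m),
            b (τ i) / (∑ j ∈ univ.filter (fun j : Fin (m+1) => j ≤ i), b (τ j)) := by
      intro τ
      congr 1
      · rw [← Fin.succ_last, Equiv.Perm.decomposeFin_symm_apply_succ]
      · rw [filter_prod_succ (fun i : Fin (m+2) => 1 ≤ i.val ∧ i.val ≤ m) (by simp)]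
        refine Finset.prod_congr ?_ fun i hi => ?_
        · apply Finset.filter_congr
          intro i _
          simp only [Fin.val_succ]
          omega
        · rw [Equiv.Perm.decomposeFin_symm_apply_succ]
          congr 1
          rw [filter_sum_succ (fun j : Fin (m+2) => 1 ≤ j.val ∧ j.val ≤ i.succ.val) (by simp)]
          refine Finset.sum_congr ?_ fun j _ => ?_
          · apply Finset.filter_congr
            intro j _
            simp only [Fin.val_succ, Fin.le_def]
            omega
          · rw [Equiv.Perm.decomposeFin_symm_apply_succ]
    rw [Finset.sum_congr rfl fun τ _ => hterm τ]
    -- relate to the full product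
    have hfull : ∀ τ : Perm (Fin (m+1)),
        (∏ i : Fin (m+1), b (τ i) / (∑ j ∈ univ.filter (fun j : Fin (m+1) => j ≤ i), b (τ j)))
        = (∏ i ∈ univ.filter (fun i : Fin (m+1) => i.val < m),
            b (τ i) / (∑ j ∈ univ.filter (fun j : Fin (m+1) => j ≤ i), b (τ j)))
          * (b (τ (Fin.last m)) / ∑ x, b x) := by
      intro τ
      rw [← Finset.prod_filter_mul_prod_filter_not univ (fun i : Fin (m+1) => i.val < m)]
      congr 1
      have hsingle : univ.filter (fun i : Fin (m+1) => ¬ i.val < m) = {Fin.last m} := by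
        ext x
        have := x.isLt
        simp only [Finset.mem_filter, Finset.mem_univ, true_and, Finset.mem_singleton,
          Fin.ext_iff, Fin.val_last]
        omega
      rw [hsingle, Finset.prod_singleton]
      congr 1
      rw [show univ.filter (fun j : Fin (m+1) => j ≤ Fin.last m) = univ from by
        simp [Finset.filter_true_of_mem, Fin.le_last]]
      exact Equiv.sum_comp τ b
    have hstep : ∀ τ : Perm (Fin (m+1)),
        (b (τ (Fin.last m)) / ∑ j, a j) *
          ∏ i ∈ univ.filter (fun i : Fin (m+1) => i.val < m),
            b (τ i) / (∑ j ∈ univ.filter (fun j : Fin (m+1) => j ≤ i), b (τ j))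
        = (∏ i : Fin (m+1), b (τ i) /
            (∑ j ∈ univ.filter (fun j : Fin (m+1) => j ≤ i), b (τ j)))
          * ((∑ x, b x) / ∑ j, a j) := by
      intro τ
      rw [hfull τ, mul_assoc, div_mul_div_comm, mul_comm (b (τ (Fin.last m))),
        mul_div_mul_left _ _ hSbpos.ne', mul_comm]
    rw [Finset.sum_congr rfl fun τ _ => hstep τ, ← Finset.sum_mul, L1' (m+1) b hb, one_mul, hSb]
  rw [Finset.sum_congr rfl fun v _ => hinner v]
  have : ∀ v : Fin (m+2), ((∑ j, a j) - a v) / (∑ j, a j) = 1 - a v / (∑ j, a j) := by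
    intro v
    rw [sub_div, div_self hS.ne']
  rw [Finset.sum_congr rfl fun v _ => this v, Finset.sum_sub_distrib, ← Finset.sum_div,
    div_self hS.ne', Finset.sum_const, Finset.card_univ, Fintype.card_fin, nsmul_eq_mul]
  push_cast
  ring


open Finset

/-- The symmetrized sum `Σ_σ (g(s_{σ(1)})/Σ₁ᵏ g)·∏_{i=2}^{k-1} g(s_{σ(i)})/Σ_{j=i}^{k-1} g(s_{σ(j)})`
equals `k-1`. -/
theorem stmt6 (k : ℕ) (hk : 2 ≤ k) (s : Fin k → ℝ) (hs : ∀ i, 0 < s i)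
    (g : ℝ → ℝ) (hgpos : ∀ x : ℝ, 0 < x → 0 < g x) :
    ∑ σ : Equiv.Perm (Fin k),
      (g (s (σ ⟨0, by omega⟩)) / ∑ j : Fin k, g (s j)) *
        ∏ i ∈ Finset.univ.filter (fun i : Fin k => 1 ≤ i.val ∧ i.val ≤ k - 2),
          g (s (σ i)) / (∑ j ∈ Finset.univ.filter
              (fun j : Fin k => i.val ≤ j.val ∧ j.val ≤ k - 2), g (s (σ j)))
      = (k : ℝ) - 1 := by
  obtain ⟨m, rfl⟩ : ∃ m, k = m + 2 := ⟨k - 2, by omega⟩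
  have h := L2 m (fun i => g (s i)) (fun i => hgpos _ (hs i))
  have hcast : ((m + 2 : ℕ) : ℝ) - 1 = (m : ℝ) + 1 := by push_cast; ring
  rw [hcast, ← h]
  refine Finset.sum_congr rfl fun σ _ => ?_
  simp only [Nat.add_sub_cancel]
  rfl
end

section
/- Let Z ≥ 1 be a random variable with law concentrated on [1,∞), and suppose there exists a Radon measure t on [0,∞) such that E[e^{-sZ}] = 1 - exp(-∫_{[0,∞)} e^{-s(1+x)}/(1+x) t(dx)) for all s > 0. Define the Radon measure m on [1,∞) by m(A) = ∫_{[0,∞)} 1_{1+x ∈ A}/(1+x) t(dx), and its k-fold convolution m^{(k)} (supported on [k,∞)). Then the law of Z restricted to any bounded Borel set A equals Σ_{k=1}^∞ ((-1)^{k+1}/k!) m^{(k)}(A), where the sum is finite since m^{(k)} is supported on [k,∞). -/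
/-!
Write `r(s) = ∫ e^{-sx} m(dx)`. The law of `Z` has Laplace transform `1 - e^{-r}` and `m^{(k)}`
has Laplace transform `r^k`, so after sorting the alternating series by sign, the two measures
`law(Z) + ∑_{k even} m^{(k)}/k!` and `∑_{k odd} m^{(k)}/k!` both have Laplace transform
`1 - e^{-r} + (cosh r - 1) = sinh r`. Measures on `[0, ∞)` are determined by their Laplace
transforms: tilting by `e^{-x}` makes them finite, and the substitution `y = e^{-x}` turns the
values of the transform at the integers into the moments of a finite measure on `[0, 1]`, which
determine it by the Weierstrass approximation theorem. On a bounded set only finitely many terms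
are nonzero, since `m^{(k)}` lives on `[k, ∞)`, and the two sides may be subtracted.
-/

open MeasureTheory Real Set

/-- Convolution of two measures on `ℝ`. -/
noncomputable def mconv (μ ν : Measure ℝ) : Measure ℝ :=
  Measure.map (fun p : ℝ × ℝ => p.1 + p.2) (μ.prod ν)

/-- `itconv m k` is the `(k+1)`-fold convolution `m^{(k+1)}` of `m` with itself. -/
noncomputable def itconv (m : Measure ℝ) : ℕ → Measure ℝ
  | 0 => m
  | (k + 1) => mconv (itconv m k) m

open scoped ENNReal Nat

noncomputable def laplace (ν : Measure ℝ) (s : ℝ) : ℝ≥0∞ :=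
  ∫⁻ x, ENNReal.ofReal (exp (-s * x)) ∂ν

lemma laplace_zero (ν : Measure ℝ) : laplace ν 0 = ν univ := by
  simp [laplace]

lemma laplace_add (μ ν : Measure ℝ) (s : ℝ) : laplace (μ + ν) s = laplace μ s + laplace ν s :=
  lintegral_add_measure _ _ _

lemma laplace_sum {ι : Type*} [Countable ι] (μ : ι → Measure ℝ) (s : ℝ) :
    laplace (Measure.sum μ) s = ∑' i, laplace (μ i) s :=
  lintegral_sum_measure _ _

instance (μ ν : Measure ℝ) [SFinite μ] [SFinite ν] : SFinite (mconv μ ν) := by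
  unfold mconv; infer_instance

instance (m : Measure ℝ) [SFinite m] (k : ℕ) : SFinite (itconv m k) := by
  induction k with
  | zero => exact ‹SFinite m›
  | succ k ih => rw [itconv]; infer_instance

lemma laplace_mconv (μ ν : Measure ℝ) [SFinite ν] (s : ℝ) :
    laplace (mconv μ ν) s = laplace μ s * laplace ν s := by
  have hexp : ∀ p : ℝ × ℝ, ENNReal.ofReal (exp (-s * (p.1 + p.2)))
      = ENNReal.ofReal (exp (-s * p.1)) * ENNReal.ofReal (exp (-s * p.2)) := fun p => by
    rw [← ENNReal.ofReal_mul (exp_nonneg _), ← exp_add, mul_add]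
  rw [laplace, mconv, lintegral_map (by fun_prop) (by fun_prop)]
  simp_rw [hexp]
  exact lintegral_prod_mul (f := fun x => ENNReal.ofReal (exp (-s * x)))
    (g := fun y => ENNReal.ofReal (exp (-s * y))) (by fun_prop) (by fun_prop)

lemma laplace_itconv (m : Measure ℝ) [SFinite m] (k : ℕ) (s : ℝ) :
    laplace (itconv m k) s = laplace m s ^ (k + 1) := by
  induction k with
  | zero => rw [itconv, pow_one]
  | succ k ih => rw [itconv, laplace_mconv, ih, ← pow_succ]

lemma ae_add_le_mconv {μ ν : Measure ℝ} [SFinite ν] {a b : ℝ} (hμ : ∀ᵐ x ∂μ, a ≤ x)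
    (hν : ∀ᵐ y ∂ν, b ≤ y) : ∀ᵐ z ∂mconv μ ν, a + b ≤ z := by
  rw [mconv, ae_map_iff (by fun_prop) measurableSet_Ici]
  filter_upwards [Measure.quasiMeasurePreserving_fst.ae hμ,
    Measure.quasiMeasurePreserving_snd.ae hν] with p h₁ h₂
  exact add_le_add h₁ h₂

lemma ae_le_itconv {m : Measure ℝ} [SFinite m] {a : ℝ} (hm : ∀ᵐ x ∂m, a ≤ x) (k : ℕ) :
    ∀ᵐ x ∂itconv m k, (k + 1) * a ≤ x := by
  induction k with
  | zero => simpa [itconv] using hm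
  | succ k ih =>
    rw [itconv]
    filter_upwards [ae_add_le_mconv ih hm] with x hx
    push_cast
    linarith

lemma measure_Iio_le_laplace (ν : Measure ℝ) {s : ℝ} (hs : 0 ≤ s) (c : ℝ) :
    ν (Iio c) ≤ ENNReal.ofReal (exp (s * c)) * laplace ν s := by
  calc ν (Iio c) = ∫⁻ _ in Iio c, 1 ∂ν := (setLIntegral_one _).symm
    _ ≤ ∫⁻ x in Iio c, ENNReal.ofReal (exp (s * c)) * ENNReal.ofReal (exp (-s * x)) ∂ν := by
      refine setLIntegral_mono (by fun_prop) fun x hx => ?_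
      rw [← ENNReal.ofReal_mul (exp_nonneg _), ← exp_add, ENNReal.one_le_ofReal, one_le_exp_iff]
      nlinarith [mem_Iio.1 hx]
    _ ≤ ∫⁻ x, ENNReal.ofReal (exp (s * c)) * ENNReal.ofReal (exp (-s * x)) ∂ν :=
      setLIntegral_le_lintegral _ _
    _ = ENNReal.ofReal (exp (s * c)) * laplace ν s := lintegral_const_mul _ (by fun_prop)

lemma ContinuousMap.continuous_integral {K : Type*} [TopologicalSpace K] [CompactSpace K]
    [MeasurableSpace K] [OpensMeasurableSpace K] (Q : Measure K) [IsFiniteMeasure Q] :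
    Continuous fun g : C(K, ℝ) => ∫ x, g x ∂Q := by
  refine (LipschitzWith.of_dist_le_mul (K := (Q.real univ).toNNReal) fun g₁ g₂ => ?_).continuous
  rw [dist_eq_norm,
    ← integral_sub (g₁.continuous.integrable_of_hasCompactSupport (.of_compactSpace _))
      (g₂.continuous.integrable_of_hasCompactSupport (.of_compactSpace _)),
    Real.coe_toNNReal _ measureReal_nonneg, mul_comm]
  refine norm_integral_le_of_norm_le_const (.of_forall fun x => ?_)
  simpa only [dist_eq_norm, ContinuousMap.sub_apply] using (g₁ - g₂).norm_coe_le_norm x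

theorem ext_of_integral_pow_eq {a b : ℝ} {Q₁ Q₂ : Measure (Icc a b)} [IsFiniteMeasure Q₁]
    [IsFiniteMeasure Q₂] (h : ∀ n : ℕ, ∫ x, (x : ℝ) ^ n ∂Q₁ = ∫ x, (x : ℝ) ^ n ∂Q₂) :
    Q₁ = Q₂ := by
  refine ext_of_forall_integral_eq_of_IsFiniteMeasure fun f => ?_
  have hpoly : (polynomialFunctions (Icc a b) : Set C(Icc a b, ℝ))
      ⊆ {g | ∫ x, g x ∂Q₁ = ∫ x, g x ∂Q₂} := by
    rw [polynomialFunctions_coe]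
    rintro _ ⟨p, rfl⟩
    have hmonomial : ∀ (Q : Measure (Icc a b)) [IsFiniteMeasure Q] (n : ℕ),
        Integrable (fun x : Icc a b => p.coeff n * (x : ℝ) ^ n) Q := fun Q _ n =>
      Continuous.integrable_of_hasCompactSupport (by fun_prop) (.of_compactSpace _)
    simp only [mem_ofPred_eq, Polynomial.toContinuousMapOnAlgHom_apply,
      Polynomial.toContinuousMapOn_apply, Polynomial.toContinuousMap_apply,
      Polynomial.eval_eq_sum_range]
    rw [integral_finsetSum _ fun n _ => hmonomial Q₁ n,
      integral_finsetSum _ fun n _ => hmonomial Q₂ n]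
    simp only [integral_const_mul, h]
  have hf : f.toContinuousMap ∈ closure (polynomialFunctions (Icc a b) : Set C(Icc a b, ℝ)) := by
    rw [← Subalgebra.topologicalClosure_coe, polynomialFunctions_closure_eq_top]
    trivial
  exact closure_minimal hpoly (isClosed_eq (ContinuousMap.continuous_integral Q₁)
    (ContinuousMap.continuous_integral Q₂)) hf

lemma laplace_withDensity_exp_neg_mul (ν : Measure ℝ) (a s : ℝ) :
    laplace (ν.withDensity fun x => ENNReal.ofReal (exp (-a * x))) s = laplace ν (s + a) := by
  rw [laplace, lintegral_withDensity_eq_lintegral_mul _ (by fun_prop) (by fun_prop), laplace]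
  congr 1 with x
  rw [Pi.mul_apply, ← ENNReal.ofReal_mul (exp_nonneg _), ← exp_add]
  ring_nf

lemma isFiniteMeasure_withDensity_exp_neg_mul {ν : Measure ℝ} {a : ℝ} (h : laplace ν a ≠ ∞) :
    IsFiniteMeasure (ν.withDensity fun x => ENNReal.ofReal (exp (-a * x))) :=
  ⟨by rwa [← laplace_zero, laplace_withDensity_exp_neg_mul, zero_add, lt_top_iff_ne_top]⟩

lemma withDensity_inv_withDensity_exp_neg_mul (ν : Measure ℝ) (a : ℝ) :
    ((ν.withDensity fun x => ENNReal.ofReal (exp (-a * x))).withDensity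
      fun x => (ENNReal.ofReal (exp (-a * x)))⁻¹) = ν :=
  withDensity_inv_same (by fun_prop) (.of_forall fun x => by simp [exp_pos])
    (.of_forall fun x => ENNReal.ofReal_ne_top)

lemma sFinite_of_laplace_ne_top {ν : Measure ℝ} {a : ℝ} (h : laplace ν a ≠ ∞) : SFinite ν := by
  have := isFiniteMeasure_withDensity_exp_neg_mul h
  rw [← withDensity_inv_withDensity_exp_neg_mul ν a]
  infer_instance

noncomputable def expNegIcc (x : ℝ) : Icc (0 : ℝ) 1 := projIcc 0 1 zero_le_one (exp (-x))

lemma continuous_expNegIcc : Continuous expNegIcc :=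
  continuous_projIcc.comp (by fun_prop)

lemma coe_expNegIcc_of_nonneg {x : ℝ} (hx : 0 ≤ x) : (expNegIcc x : ℝ) = exp (-x) := by
  rw [expNegIcc, projIcc_of_mem _ ⟨(exp_pos _).le, exp_le_one_iff.2 (neg_nonpos.2 hx)⟩]

lemma integral_pow_map_expNegIcc {ρ : Measure ℝ} (hρ : ∀ᵐ x ∂ρ, 0 ≤ x) (n : ℕ) :
    ∫ y, (y : ℝ) ^ n ∂ρ.map expNegIcc = (laplace ρ n).toReal := by
  have hpow : Continuous fun y : Icc (0 : ℝ) 1 => (y : ℝ) ^ n := by fun_prop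
  rw [integral_map continuous_expNegIcc.aemeasurable hpow.aestronglyMeasurable, laplace,
    ← integral_eq_lintegral_of_nonneg_ae (.of_forall fun x => (exp_pos _).le) (by fun_prop)]
  refine integral_congr_ae ?_
  filter_upwards [hρ] with x hx
  rw [coe_expNegIcc_of_nonneg hx, ← exp_nat_mul]
  ring_nf

lemma map_neg_log_map_expNegIcc {ρ : Measure ℝ} (hρ : ∀ᵐ x ∂ρ, 0 ≤ x) :
    (ρ.map expNegIcc).map (fun y : Icc (0 : ℝ) 1 => -log y) = ρ := by
  rw [Measure.map_map (by fun_prop) continuous_expNegIcc.measurable]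
  conv_rhs => rw [← Measure.map_id (μ := ρ)]
  refine Measure.map_congr ?_
  filter_upwards [hρ] with x hx
  simp [coe_expNegIcc_of_nonneg hx]

theorem ext_of_laplace_eq {ν₁ ν₂ : Measure ℝ} (h₁ : ∀ᵐ x ∂ν₁, 0 ≤ x) (h₂ : ∀ᵐ x ∂ν₂, 0 ≤ x)
    (hfin : ∀ s, 0 < s → laplace ν₁ s ≠ ∞) (h : ∀ s, 0 < s → laplace ν₁ s = laplace ν₂ s) :
    ν₁ = ν₂ := by
  set w : ℝ → ℝ≥0∞ := fun x => ENNReal.ofReal (exp (-1 * x))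
  have := isFiniteMeasure_withDensity_exp_neg_mul (hfin 1 one_pos)
  have := isFiniteMeasure_withDensity_exp_neg_mul (h 1 one_pos ▸ hfin 1 one_pos)
  have hw₁ : ∀ᵐ x ∂ν₁.withDensity w, 0 ≤ x := (withDensity_absolutelyContinuous ν₁ w).ae_le h₁
  have hw₂ : ∀ᵐ x ∂ν₂.withDensity w, 0 ≤ x := (withDensity_absolutelyContinuous ν₂ w).ae_le h₂
  have hQ : (ν₁.withDensity w).map expNegIcc = (ν₂.withDensity w).map expNegIcc :=
    ext_of_integral_pow_eq fun n => by
      rw [integral_pow_map_expNegIcc hw₁, integral_pow_map_expNegIcc hw₂,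
        laplace_withDensity_exp_neg_mul, laplace_withDensity_exp_neg_mul, h _ (by positivity)]
  have hρ : ν₁.withDensity w = ν₂.withDensity w := by
    rw [← map_neg_log_map_expNegIcc hw₁, hQ, map_neg_log_map_expNegIcc hw₂]
  rw [← withDensity_inv_withDensity_exp_neg_mul ν₁ 1,
    ← withDensity_inv_withDensity_exp_neg_mul ν₂ 1]
  exact congrArg (fun ρ : Measure ℝ => ρ.withDensity fun x => (w x)⁻¹) hρ

noncomputable def expConvTerm (m : Measure ℝ) (k : ℕ) : Measure ℝ :=
  (((k + 1)! : ℝ≥0∞))⁻¹ • itconv m k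

lemma laplace_expConvTerm (m : Measure ℝ) [SFinite m] (k : ℕ) {s : ℝ} (hs : laplace m s ≠ ∞) :
    laplace (expConvTerm m k) s
      = ENNReal.ofReal ((laplace m s).toReal ^ (k + 1) / (k + 1)!) := by
  rw [expConvTerm, laplace, lintegral_smul_measure, ← laplace, laplace_itconv, smul_eq_mul,
    div_eq_inv_mul, ENNReal.ofReal_mul (by positivity), ENNReal.ofReal_pow ENNReal.toReal_nonneg,
    ENNReal.ofReal_toReal hs, ENNReal.ofReal_inv_of_pos (by positivity), ENNReal.ofReal_natCast]

lemma ENNReal.tsum_ofReal_of_hasSum {f : ℕ → ℝ} {a : ℝ} (hf : ∀ n, 0 ≤ f n) (h : HasSum f a) :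
    ∑' n, ENNReal.ofReal (f n) = ENNReal.ofReal a := by
  rw [← ENNReal.ofReal_tsum_of_nonneg hf h.summable, h.tsum_eq]

lemma hasSum_cosh_sub_one (r : ℝ) :
    HasSum (fun j : ℕ => r ^ (2 * j + 2) / (2 * j + 2)!) (cosh r - 1) := by
  have := (hasSum_nat_add_iff' 1).2 (Real.hasSum_cosh r)
  simpa [mul_add] using this

theorem add_sum_expConvTerm_odd_eq_sum_expConvTerm_even (P m : Measure ℝ) [SFinite m]
    (hP : ∀ᵐ x ∂P, 0 ≤ x) (hm : ∀ᵐ x ∂m, 0 ≤ x) (hmfin : ∀ s, 0 < s → laplace m s ≠ ∞)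
    (hPm : ∀ s, 0 < s → laplace P s = ENNReal.ofReal (1 - exp (-(laplace m s).toReal))) :
    P + Measure.sum (fun j => expConvTerm m (2 * j + 1))
      = Measure.sum (fun j => expConvTerm m (2 * j)) := by
  have hterm : ∀ k, ∀ᵐ x ∂expConvTerm m k, 0 ≤ x := fun k =>
    Measure.ae_smul_measure (by simpa using ae_le_itconv hm k) _
  have hrhs : ∀ s, 0 < s → laplace (Measure.sum fun j => expConvTerm m (2 * j)) s
      = ENNReal.ofReal (sinh (laplace m s).toReal) := by
    intro s hs
    simp_rw [laplace_sum, laplace_expConvTerm m _ (hmfin s hs)]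
    exact ENNReal.tsum_ofReal_of_hasSum (fun j => by positivity) (Real.hasSum_sinh _)
  have hlhs : ∀ s, 0 < s → laplace (P + Measure.sum fun j => expConvTerm m (2 * j + 1)) s
      = ENNReal.ofReal (sinh (laplace m s).toReal) := by
    intro s hs
    have hr : 0 ≤ (laplace m s).toReal := ENNReal.toReal_nonneg
    simp_rw [laplace_add, laplace_sum, hPm s hs, laplace_expConvTerm m _ (hmfin s hs), add_assoc,
      one_add_one_eq_two]
    rw [ENNReal.tsum_ofReal_of_hasSum (fun j => by positivity) (hasSum_cosh_sub_one _),
      ← ENNReal.ofReal_add (sub_nonneg.2 (exp_le_one_iff.2 (neg_nonpos.2 hr)))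
        (sub_nonneg.2 (one_le_cosh _)), sinh_eq, cosh_eq]
    congr 1
    ring
  refine ext_of_laplace_eq ?_ (Measure.ae_sum_iff.2 fun j => hterm _)
    (fun s hs => hlhs s hs ▸ ENNReal.ofReal_ne_top) fun s hs => by rw [hlhs s hs, hrhs s hs]
  exact ae_add_measure_iff.2 ⟨hP, Measure.ae_sum_iff.2 fun j => hterm _⟩

lemma ENNReal.toReal_eq_tsum_neg_one_pow_mul {x : ℝ≥0∞} {a : ℕ → ℝ≥0∞} (ha : ∑' k, a k ≠ ∞)
    (h : x + ∑' j, a (2 * j + 1) = ∑' j, a (2 * j)) :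
    x.toReal = ∑' k, (-1) ^ k * (a k).toReal := by
  have hfin : ∀ k, a k ≠ ∞ := ENNReal.ne_top_of_tsum_ne_top ha
  have hsum := ENNReal.summable_toReal ha
  have hodd : ∑' j, a (2 * j + 1) ≠ ∞ :=
    ne_top_of_le_ne_top ha (ENNReal.tsum_comp_le_tsum_of_injective (fun i j h => by omega) a)
  have hx : x ≠ ∞ := ne_top_of_le_ne_top ha <| le_self_add.trans <| h.le.trans <|
    ENNReal.tsum_comp_le_tsum_of_injective (fun i j h => by omega) a
  have heven_sign : ∀ j, (-1 : ℝ) ^ (2 * j) * (a (2 * j)).toReal = (a (2 * j)).toReal :=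
    fun j => by rw [pow_mul, neg_one_sq, one_pow, one_mul]
  have hodd_sign : ∀ j, (-1 : ℝ) ^ (2 * j + 1) * (a (2 * j + 1)).toReal
      = -(a (2 * j + 1)).toReal := fun j => by
    rw [pow_succ, pow_mul, neg_one_sq, one_pow, one_mul, neg_one_mul]
  have hreal := congrArg ENNReal.toReal h
  rw [ENNReal.toReal_add hx hodd, ENNReal.tsum_toReal_eq fun j => hfin _,
    ENNReal.tsum_toReal_eq fun j => hfin _] at hreal
  rw [← tsum_even_add_odd
    (by simp_rw [heven_sign]; exact hsum.comp_injective fun i j h => by omega)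
    (by simp_rw [hodd_sign]; exact (hsum.comp_injective fun i j h => by omega).neg)]
  simp_rw [heven_sign, hodd_sign, tsum_neg]
  linarith

lemma expConvTerm_apply_eq_zero {m : Measure ℝ} [SFinite m] (hm : ∀ᵐ x ∂m, 1 ≤ x) {k : ℕ}
    {A : Set ℝ} (hA : A ⊆ Iio ((k : ℝ) + 1)) : expConvTerm m k A = 0 :=
  Measure.smul_absolutelyContinuous <| measure_mono_null hA <| measure_eq_zero_iff_ae_notMem.2 <|
    (ae_le_itconv hm k).mono fun x hx => not_lt.2 (by simpa using hx)

lemma expConvTerm_apply_ne_top {m : Measure ℝ} [SFinite m] (hm : laplace m 1 ≠ ∞) {c : ℝ}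
    {A : Set ℝ} (hA : A ⊆ Iio c) (k : ℕ) : expConvTerm m k A ≠ ∞ := by
  rw [expConvTerm, Measure.smul_apply, smul_eq_mul]
  refine ENNReal.mul_ne_top (by simp [Nat.factorial_ne_zero]) (ne_top_of_le_ne_top ?_
    ((measure_mono hA).trans (measure_Iio_le_laplace _ zero_le_one _)))
  rw [laplace_itconv]
  exact ENNReal.mul_ne_top ENNReal.ofReal_ne_top (ENNReal.pow_ne_top hm)

lemma tsum_expConvTerm_apply_ne_top {m : Measure ℝ} [SFinite m] (hm1 : ∀ᵐ x ∂m, 1 ≤ x)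
    (hm : laplace m 1 ≠ ∞) {A : Set ℝ} (hA : BddAbove A) : ∑' k, expConvTerm m k A ≠ ∞ := by
  obtain ⟨c, hc⟩ := hA
  obtain ⟨N, hN⟩ := exists_nat_gt c
  have hAN : A ⊆ Iio (N : ℝ) := fun x hx => (hc hx).trans_lt hN
  have hvanish : ∀ k ∉ Finset.range N, expConvTerm m k A = 0 := fun k hk => by
    refine expConvTerm_apply_eq_zero hm1 (hAN.trans (Iio_subset_Iio ?_))
    simp only [Finset.mem_range, not_lt] at hk
    exact_mod_cast hk.trans k.le_succ
  rw [tsum_eq_sum hvanish]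
  exact ENNReal.sum_ne_top.2 fun k _ => expConvTerm_apply_ne_top hm hAN k

lemma laplace_map_eq_ofReal_integral {Ω : Type*} [MeasurableSpace Ω] {μ : Measure Ω}
    [IsFiniteMeasure μ] {Z : Ω → ℝ} (hZ : Measurable Z) (hZ0 : ∀ᵐ ω ∂μ, 0 ≤ Z ω) {s : ℝ}
    (hs : 0 ≤ s) : laplace (μ.map Z) s = ENNReal.ofReal (∫ ω, exp (-s * Z ω) ∂μ) := by
  have hint : Integrable (fun ω => exp (-s * Z ω)) μ := by
    refine (integrable_const (1 : ℝ)).mono' (by fun_prop) ?_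
    filter_upwards [hZ0] with ω hω
    rw [norm_of_nonneg (exp_pos _).le, exp_le_one_iff]
    nlinarith
  rw [laplace, lintegral_map (by fun_prop) hZ,
    ofReal_integral_eq_lintegral_ofReal hint (.of_forall fun ω => (exp_pos _).le)]

lemma ae_one_le_map_one_add_withDensity {t : Measure ℝ} (ht : t (Iio 0) = 0)
    (w : ℝ → ℝ≥0∞) : ∀ᵐ x ∂(t.withDensity w).map (fun x => 1 + x), 1 ≤ x := by
  rw [ae_map_iff (by fun_prop) measurableSet_Ici]
  filter_upwards [(withDensity_absolutelyContinuous t w).ae_le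
    (measure_eq_zero_iff_ae_notMem.1 ht)] with x hx
  simpa using hx

lemma laplace_map_one_add_withDensity {t : Measure ℝ} (ht : t (Iio 0) = 0) (s : ℝ) :
    laplace ((t.withDensity fun x => ENNReal.ofReal (1 / (1 + x))).map (fun x => 1 + x)) s
      = ∫⁻ x in Ici 0, ENNReal.ofReal (exp (-s * (1 + x)) / (1 + x)) ∂t := by
  have ht0 : ∀ᵐ x ∂t, x ∈ Ici (0 : ℝ) := by
    simpa using measure_eq_zero_iff_ae_notMem.1 ht
  rw [laplace, lintegral_map (by fun_prop) (by fun_prop),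
    lintegral_withDensity_eq_lintegral_mul _ (by fun_prop) (by fun_prop),
    Measure.restrict_eq_self_of_ae_mem ht0]
  refine lintegral_congr_ae ?_
  filter_upwards [ht0] with x hx
  rw [Pi.mul_apply, ← ENNReal.ofReal_mul (by have := mem_Ici.1 hx; positivity), one_div,
    inv_mul_eq_div]

theorem stmt8_general {Ω : Type*} [MeasurableSpace Ω] (μ : Measure Ω) [IsProbabilityMeasure μ]
    (Z : Ω → ℝ) (hZm : Measurable Z) (hZ1 : ∀ᵐ ω ∂μ, 1 ≤ Z ω)
    (t : Measure ℝ) (ht : t (Set.Iio 0) = 0)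
    (hfin : ∀ s : ℝ, 0 < s →
      (∫⁻ x in Set.Ici (0 : ℝ), ENNReal.ofReal (Real.exp (-s * (1 + x)) / (1 + x)) ∂t) ≠ ⊤)
    (hlap : ∀ s : ℝ, 0 < s →
      ∫ ω, Real.exp (-s * Z ω) ∂μ
        = 1 - Real.exp
            (-(∫⁻ x in Set.Ici (0 : ℝ),
                ENNReal.ofReal (Real.exp (-s * (1 + x)) / (1 + x)) ∂t).toReal))
    (m : Measure ℝ)
    (hm : m = Measure.map (fun x => 1 + x)
        (t.withDensity (fun x => ENNReal.ofReal (1 / (1 + x)))))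
    (A : Set ℝ) (hAbdd : Bornology.IsBounded A) :
    ((Measure.map Z μ) A).toReal
      = ∑' k : ℕ, ((-1 : ℝ) ^ k / (Nat.factorial (k + 1) : ℝ)) * ((itconv m k) A).toReal := by
  have hm1 : ∀ᵐ x ∂m, 1 ≤ x := hm ▸ ae_one_le_map_one_add_withDensity ht _
  have hLm : ∀ s, laplace m s = ∫⁻ x in Ici 0, ENNReal.ofReal (exp (-s * (1 + x)) / (1 + x)) ∂t :=
    hm ▸ laplace_map_one_add_withDensity ht
  have hmfin : ∀ s, 0 < s → laplace m s ≠ ∞ := fun s hs => hLm s ▸ hfin s hs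
  have : SFinite m := sFinite_of_laplace_ne_top (hmfin 1 one_pos)
  have hZ0 : ∀ᵐ ω ∂μ, 0 ≤ Z ω := hZ1.mono fun ω h => zero_le_one.trans h
  have hLZ : ∀ s, 0 < s → laplace (μ.map Z) s = ENNReal.ofReal (1 - exp (-(laplace m s).toReal)) :=
    fun s hs => by rw [laplace_map_eq_ofReal_integral hZm hZ0 hs.le, hlap s hs, hLm]
  have hmeas := add_sum_expConvTerm_odd_eq_sum_expConvTerm_even (μ.map Z) m
    ((ae_map_iff hZm.aemeasurable measurableSet_Ici).2 hZ0)
    (hm1.mono fun x h => zero_le_one.trans h) hmfin hLZ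
  rw [ENNReal.toReal_eq_tsum_neg_one_pow_mul
    (tsum_expConvTerm_apply_ne_top hm1 (hmfin 1 one_pos) hAbdd.bddAbove) (by
      simpa only [Measure.add_apply, Measure.sum_apply_of_countable] using congrArg (· A) hmeas)]
  congr 1 with k
  rw [expConvTerm, Measure.smul_apply, smul_eq_mul, ENNReal.toReal_mul, ENNReal.toReal_inv,
    ENNReal.toReal_natCast]
  ring

/-- The law of `Z` equals the alternating series `Σ_{k≥1} ((-1)^{k+1}/k!) m^{(k)}` on bounded
Borel sets, where `m(A) = ∫ 1_{1+x∈A}/(1+x) t(dx)`. -/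
theorem stmt8 {Ω : Type*} [MeasurableSpace Ω] (μ : Measure Ω) [IsProbabilityMeasure μ]
    (Z : Ω → ℝ) (hZm : Measurable Z) (hZ1 : ∀ᵐ ω ∂μ, 1 ≤ Z ω)
    (t : Measure ℝ) [IsLocallyFiniteMeasure t] (ht : t (Set.Iio 0) = 0)
    (hfin : ∀ s : ℝ, 0 < s →
      (∫⁻ x in Set.Ici (0 : ℝ), ENNReal.ofReal (Real.exp (-s * (1 + x)) / (1 + x)) ∂t) ≠ ⊤)
    (hlap : ∀ s : ℝ, 0 < s →
      ∫ ω, Real.exp (-s * Z ω) ∂μ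
        = 1 - Real.exp
            (-(∫⁻ x in Set.Ici (0 : ℝ),
                ENNReal.ofReal (Real.exp (-s * (1 + x)) / (1 + x)) ∂t).toReal))
    (m : Measure ℝ)
    (hm : m = Measure.map (fun x => 1 + x)
        (t.withDensity (fun x => ENNReal.ofReal (1 / (1 + x)))))
    (A : Set ℝ) (hA : MeasurableSet A) (hAbdd : Bornology.IsBounded A) :
    ((Measure.map Z μ) A).toReal
      = ∑' k : ℕ, ((-1 : ℝ) ^ k / (Nat.factorial (k + 1) : ℝ)) * ((itconv m k) A).toReal :=
  stmt8_general μ Z hZm hZ1 t ht hfin hlap m hm A hAbdd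
end

section
/- Let G be a geometric random variable on {1,2,3,…} with success probability p = 1 - e^{-λ}, λ ∈ (0,1), and set X = e^G, g(s) = E[e^{-sX}]. Then the limit lim_{s→0+} (-s g'(s)/(1 - g(s))) does not exist; more precisely, for each α ∈ [0,1), along s_n = e^{-n-α} the limit L_α = lim_{n→∞} (-s_n g'(s_n)/(1 - g(s_n))) exists, and the function α ↦ L_α is non-constant. -/
/-!
For `s = e^{-n-α}`, both `1 - g(s)` and `-s g'(s)` are averages of `f(s e^G)` with
`f(x) = 1 - e^{-x}` and `f(x) = x e^{-x}`. Putting `j = G - n`, each equals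
`p e^{λ(1-n)} ∑_{j ≥ 1-n} e^{-λ j} f(e^{j-α})`. The factor in front cancels in the ratio, and
the truncated sums tend to the lattice sums `A(α)`, `B(α)` over all `j ∈ ℤ`. So
`L_α = B(α)/A(α)`.

Suppose `B = c A` on `[0,1)`. Then the lattice sum of `φ(x) = x e^{-x} - c(1 - e^{-x})` vanishes
on `[0,1)`. It is `e^{-λα}` times a `1`-periodic function, so it vanishes everywhere. Let
`s = -λ + 2πi`; for `t = e^{u+j}` we have `t^s = e^{-λ j} e^{s u}`. Hence the Mellin transform of
`φ` at `s` is an integral of the lattice sum over one period, which is `0`. But this Mellin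
transform is `Γ(s+1) + c Γ(s) = Γ(s)(s + c) ≠ 0`.
-/

open MeasureTheory Real Set Filter Topology

namespace GeometricLaplace

def BoundedByMinOne (f : ℝ → ℝ) (C : ℝ) : Prop := ∀ x, 0 < x → |f x| ≤ C * min 1 x

namespace BoundedByMinOne

variable {f g : ℝ → ℝ} {C D : ℝ}

lemma nonneg (hf : BoundedByMinOne f C) : 0 ≤ C := by
  simpa using (abs_nonneg _).trans (hf 1 one_pos)

lemma abs_le (hf : BoundedByMinOne f C) {x : ℝ} (hx : 0 < x) : |f x| ≤ C :=
  (hf x hx).trans (mul_le_of_le_one_right hf.nonneg (min_le_left _ _))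

lemma sub_mul (hf : BoundedByMinOne f C) (hg : BoundedByMinOne g D) (c : ℝ) :
    BoundedByMinOne (fun x => f x - c * g x) (C + |c| * D) := fun x hx =>
  calc |f x - c * g x| ≤ |f x| + |c| * |g x| := by rw [← abs_mul]; exact abs_sub _ _
    _ ≤ C * min 1 x + |c| * (D * min 1 x) := by gcongr; exacts [hf x hx, hg x hx]
    _ = (C + |c| * D) * min 1 x := by ring

end BoundedByMinOne

lemma boundedByMinOne_one_sub_exp_neg : BoundedByMinOne (fun x => 1 - exp (-x)) 1 := by
  intro x hx
  show |1 - exp (-x)| ≤ 1 * min 1 x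
  have := add_one_le_exp (-x)
  rw [one_mul, abs_of_nonneg (by simpa using exp_le_one_iff.2 (neg_nonpos.2 hx.le))]
  exact le_min (by linarith [exp_pos (-x)]) (by linarith)

lemma boundedByMinOne_mul_exp_neg : BoundedByMinOne (fun x => x * exp (-x)) 1 := by
  intro x hx
  show |x * exp (-x)| ≤ 1 * min 1 x
  rw [one_mul, abs_of_nonneg (by positivity)]
  refine le_min ?_ (mul_le_of_le_one_right hx.le (exp_le_one_iff.2 (neg_nonpos.2 hx.le)))
  rw [exp_neg, ← div_eq_mul_inv, div_le_one (exp_pos x)]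
  linarith [add_one_le_exp x]

noncomputable def latticeTerm (lam : ℝ) (f : ℝ → ℝ) (α : ℝ) (j : ℤ) : ℝ :=
  exp (-lam * j) * f (exp (j - α))

noncomputable def latticeSum (lam : ℝ) (f : ℝ → ℝ) (α : ℝ) : ℝ :=
  ∑' j : ℤ, latticeTerm lam f α j

variable {lam : ℝ}

lemma latticeTerm_min_one_nonneg (lam α : ℝ) (j : ℤ) : 0 ≤ latticeTerm lam (min 1) α j :=
  mul_nonneg (exp_pos _).le (le_min zero_le_one (exp_pos _).le)

lemma latticeTerm_min_one_antitone (lam : ℝ) (j : ℤ) :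
    Antitone fun α => latticeTerm lam (min 1) α j := fun _ _ h =>
  mul_le_mul_of_nonneg_left (min_le_min le_rfl (exp_le_exp.2 (by linarith))) (exp_pos _).le

lemma summable_latticeTerm_min_one (h0 : 0 < lam) (h1 : lam < 1) (α : ℝ) :
    Summable (latticeTerm lam (min 1) α) := by
  refine .of_nat_of_neg ?_ ?_
  · refine .of_nonneg_of_le (fun _ => latticeTerm_min_one_nonneg _ _ _) (fun n => ?_)
      (summable_geometric_of_lt_one (exp_pos (-lam)).le (exp_lt_one_iff.2 (by linarith)))
    calc latticeTerm lam (min 1) α n ≤ exp (-lam * n) * 1 :=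
          mul_le_mul_of_nonneg_left (min_le_left _ _) (exp_pos _).le
      _ = exp (-lam) ^ n := by rw [mul_one, ← exp_nat_mul, mul_comm]
  · refine .of_nonneg_of_le (fun _ => latticeTerm_min_one_nonneg _ _ _) (fun n => ?_)
      ((summable_geometric_of_lt_one (exp_pos (lam - 1)).le
        (exp_lt_one_iff.2 (by linarith))).mul_left (exp (-α)))
    calc latticeTerm lam (min 1) α (-n) ≤ exp (-lam * (-n : ℤ)) * exp ((-n : ℤ) - α) :=
          mul_le_mul_of_nonneg_left (min_le_right _ _) (exp_pos _).le
      _ = exp (-α) * exp (lam - 1) ^ n := by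
          rw [← exp_nat_mul, ← exp_add, ← exp_add]; push_cast; ring_nf

lemma abs_latticeTerm_le {f : ℝ → ℝ} {C : ℝ} (hf : BoundedByMinOne f C)
    (α : ℝ) (j : ℤ) : |latticeTerm lam f α j| ≤ C * latticeTerm lam (min 1) α j := by
  rw [latticeTerm, latticeTerm, abs_mul, abs_of_pos (exp_pos _), mul_left_comm]
  exact mul_le_mul_of_nonneg_left (hf _ (exp_pos _)) (exp_pos _).le

lemma summable_latticeTerm (h0 : 0 < lam) (h1 : lam < 1) {f : ℝ → ℝ} {C : ℝ}
    (hf : BoundedByMinOne f C) (α : ℝ) : Summable (latticeTerm lam f α) :=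
  .of_norm_bounded ((summable_latticeTerm_min_one h0 h1 α).mul_left C)
    (abs_latticeTerm_le hf α)

lemma latticeSum_pos (h0 : 0 < lam) (h1 : lam < 1) {f : ℝ → ℝ} {C : ℝ}
    (hf : BoundedByMinOne f C) (hpos : ∀ x, 0 < x → 0 < f x) (α : ℝ) :
    0 < latticeSum lam f α :=
  (summable_latticeTerm h0 h1 hf α).tsum_pos
    (fun _ => (mul_pos (exp_pos _) (hpos _ (exp_pos _))).le) 0
    (mul_pos (exp_pos _) (hpos _ (exp_pos _)))

lemma latticeSum_sub_mul (h0 : 0 < lam) (h1 : lam < 1) {f g : ℝ → ℝ} {C D : ℝ}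
    (hf : BoundedByMinOne f C) (hg : BoundedByMinOne g D) (c α : ℝ) :
    latticeSum lam (fun x => f x - c * g x) α = latticeSum lam f α - c * latticeSum lam g α := by
  rw [latticeSum, latticeSum, latticeSum, ← tsum_mul_left,
    ← (summable_latticeTerm h0 h1 hf α).tsum_sub ((summable_latticeTerm h0 h1 hg α).mul_left c)]
  exact tsum_congr fun j => by simp only [latticeTerm]; ring

lemma latticeSum_add_one (lam : ℝ) (f : ℝ → ℝ) (α : ℝ) :
    latticeSum lam f (α + 1) = exp (-lam) * latticeSum lam f α := by
  have shift (j : ℤ) :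
      latticeTerm lam f (α + 1) j = exp (-lam) * latticeTerm lam f α (j - 1) := by
    simp only [latticeTerm]
    rw [← mul_assoc, ← exp_add]; push_cast; ring_nf
  rw [latticeSum, latticeSum, tsum_congr shift, tsum_mul_left]
  exact congrArg _ ((Equiv.subRight (1 : ℤ)).tsum_eq (latticeTerm lam f α))

lemma latticeSum_eq_zero_of_forall_Ico {f : ℝ → ℝ}
    (h : ∀ α ∈ Ico (0 : ℝ) 1, latticeSum lam f α = 0) (α : ℝ) :
    latticeSum lam f α = 0 := by
  have hper : Function.Periodic (fun α => exp (lam * α) * latticeSum lam f α) 1 := fun α => by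
    simp only [latticeSum_add_one, ← mul_assoc, ← exp_add]; ring_nf
  obtain ⟨β, hβ, hαβ⟩ := hper.exists_mem_Ico₀ one_pos α
  simpa [h β hβ, exp_ne_zero] using hαβ

lemma integral_comp_exp {E : Type*} [NormedAddCommGroup E] [NormedSpace ℝ E] (g : ℝ → E) :
    ∫ x, exp x • g (exp x) = ∫ y in Ioi 0, g y := by
  rw [← range_exp, ← image_univ, integral_image_eq_integral_abs_deriv_smul MeasurableSet.univ
    (fun x _ => (hasDerivAt_exp x).hasDerivWithinAt) exp_injective.injOn, setIntegral_univ]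
  simp only [abs_of_pos (exp_pos _)]

lemma integrable_comp_exp_iff {E : Type*} [NormedAddCommGroup E] [NormedSpace ℝ E]
    (g : ℝ → E) :
    Integrable (fun x => exp x • g (exp x)) ↔ IntegrableOn g (Ioi 0) := by
  rw [← range_exp, ← image_univ, integrableOn_image_iff_integrableOn_abs_deriv_smul
    MeasurableSet.univ (fun x _ => (hasDerivAt_exp x).hasDerivWithinAt) exp_injective.injOn,
    integrableOn_univ]
  simp only [abs_of_pos (exp_pos _)]

lemma exp_smul_cpow_exp (s : ℂ) (v : ℝ) :
    exp v • ((exp v : ℝ) : ℂ) ^ (s - 1) = Complex.exp (s * v) := by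
  rw [Complex.real_smul, Complex.cpow_def_of_ne_zero (Complex.ofReal_ne_zero.2 (exp_pos v).ne'),
    ← Complex.ofReal_log (exp_pos v).le, log_exp, Complex.ofReal_exp, ← Complex.exp_add]
  ring_nf

lemma mellin_eq_integral_cexp (f : ℝ → ℂ) (s : ℂ) :
    mellin f s = ∫ v : ℝ, Complex.exp (s * v) * f (exp v) := by
  rw [mellin, ← integral_comp_exp]
  refine integral_congr_ae (ae_of_all _ fun v => ?_)
  simp only [← exp_smul_cpow_exp, smul_mul_assoc, smul_eq_mul]

lemma mellinConvergent_iff_integrable_cexp (f : ℝ → ℂ) (s : ℂ) :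
    MellinConvergent f s ↔ Integrable fun v : ℝ => Complex.exp (s * v) * f (exp v) := by
  rw [MellinConvergent, ← integrable_comp_exp_iff]
  simp only [← exp_smul_cpow_exp, smul_mul_assoc, smul_eq_mul]

lemma mellinConvergent_of_boundedByMinOne {f : ℝ → ℝ} {C : ℝ} (hfc : Continuous f)
    (hf : BoundedByMinOne f C) {s : ℂ} (hs0 : -1 < s.re) (hs1 : s.re < 0) :
    MellinConvergent (fun t => (f t : ℂ)) s := by
  have hC := hf.nonneg
  refine mellinConvergent_of_isBigO_rpow (a := 0) (b := -1)
    ((Complex.continuous_ofReal.comp hfc).locallyIntegrable.locallyIntegrableOn _) ?_ hs1 ?_ hs0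
  · refine Asymptotics.IsBigO.of_bound C ?_
    filter_upwards [eventually_gt_atTop 0] with t ht
    simpa using (hf t ht).trans (mul_le_of_le_one_right hC (min_le_left _ _))
  · refine Asymptotics.IsBigO.of_bound C ?_
    filter_upwards [self_mem_nhdsWithin] with t (ht : 0 < t)
    simpa [abs_of_pos ht] using (hf t ht).trans (mul_le_mul_of_nonneg_left (min_le_right _ _) hC)

lemma mellin_mul_exp_neg {s : ℂ} (hs : -1 < s.re) :
    mellin (fun t => ((t * exp (-t) : ℝ) : ℂ)) s = Complex.Gamma (s + 1) := by
  rw [Complex.Gamma_eq_integral (by simp; linarith), Complex.GammaIntegral, mellin]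
  refine setIntegral_congr_fun measurableSet_Ioi fun t (ht : 0 < t) => ?_
  rw [add_sub_cancel_right, smul_eq_mul, Complex.ofReal_mul,
    show s = s - 1 + 1 by ring, Complex.cpow_add _ _ (Complex.ofReal_ne_zero.2 ht.ne'),
    Complex.cpow_one, add_sub_cancel_right]
  ring

lemma mellin_one_sub_exp_neg {s : ℂ} (hs0 : -1 < s.re) (hs1 : s.re < 0) :
    mellin (fun t => ((1 - exp (-t) : ℝ) : ℂ)) s = -Complex.Gamma s := by
  have hs : s ≠ 0 := fun h => by simp [h] at hs1
  have hu (t : ℝ) (ht : t ∈ Ioi 0) :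
      HasDerivAt (fun t : ℝ => (t : ℂ) ^ s / s) ((t : ℂ) ^ (s - 1)) t := by
    simpa using hasDerivAt_ofReal_cpow_const' (ne_of_gt ht) (r := s - 1)
      (fun h => hs (by linear_combination h))
  have hv (t : ℝ) (_ : t ∈ Ioi 0) :
      HasDerivAt (fun t : ℝ => ((1 - exp (-t) : ℝ) : ℂ)) ((exp (-t) : ℝ) : ℂ) t := by
    simpa using ((hasDerivAt_neg t).exp.const_sub 1).ofReal_comp
  have hbound (t : ℝ) (ht : 0 < t) :
      ‖(t : ℂ) ^ s / s * ((1 - exp (-t) : ℝ) : ℂ)‖ ≤ t ^ s.re * min 1 t / ‖s‖ := by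
    rw [norm_mul, norm_div, Complex.norm_cpow_eq_rpow_re_of_pos ht, Complex.norm_real,
      Real.norm_eq_abs, div_mul_eq_mul_div]
    gcongr
    simpa using boundedByMinOne_one_sub_exp_neg t ht
  have ibp := integral_Ioi_mul_deriv_eq_deriv_mul hu hv ?_ ?_ (a' := 0) (b' := 0) ?_ ?_
  · have hΓ : ∫ t in Ioi (0 : ℝ), (t : ℂ) ^ s / s * ((exp (-t) : ℝ) : ℂ) =
        Complex.Gamma (s + 1) / s := by
      rw [Complex.Gamma_eq_integral (by simp; linarith), Complex.GammaIntegral,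
        ← integral_div, add_sub_cancel_right]
      refine setIntegral_congr_fun measurableSet_Ioi fun t _ => ?_
      ring
    rw [Complex.Gamma_add_one s hs, mul_div_cancel_left₀ _ hs] at hΓ
    simp only [mellin, smul_eq_mul]
    linear_combination ibp - hΓ
  · refine IntegrableOn.congr_fun
      (f := fun t : ℝ => ((exp (-t) : ℝ) : ℂ) * (t : ℂ) ^ (s + 1 - 1) / s)
      ((Complex.GammaIntegral_convergent (by simp; linarith)).div_const s)
      (fun t _ => by simp only [add_sub_cancel_right, Pi.mul_apply]; ring) measurableSet_Ioi
  · exact mellinConvergent_of_boundedByMinOne (by fun_prop) boundedByMinOne_one_sub_exp_neg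
      hs0 hs1
  · refine squeeze_zero_norm' (a := fun t => t ^ (s.re + 1) / ‖s‖) ?_ ?_
    · filter_upwards [self_mem_nhdsWithin] with t (ht : 0 < t)
      refine (hbound t ht).trans ?_
      rw [rpow_add_one ht.ne']
      gcongr
      exact min_le_right _ _
    · have := ((continuousAt_rpow_const 0 (s.re + 1) (Or.inr (by linarith))).tendsto.div_const
        ‖s‖).mono_left (nhdsWithin_le_nhds (s := Ioi 0))
      simpa [zero_rpow (by linarith : s.re + 1 ≠ 0)] using this
  · refine squeeze_zero_norm' (a := fun t => t ^ s.re / ‖s‖) ?_ ?_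
    · filter_upwards [eventually_gt_atTop 0] with t ht
      refine (hbound t ht).trans ?_
      gcongr
      exact mul_le_of_le_one_right (by positivity) (min_le_left _ _)
    · simpa using (tendsto_rpow_neg_atTop (y := -s.re) (by linarith)).div_const ‖s‖

lemma cexp_mul_intCast (lam : ℝ) (j : ℤ) :
    Complex.exp ((-lam + 2 * π * Complex.I) * (j : ℝ)) = exp (-lam * j) := by
  rw [add_mul, Complex.exp_add, Complex.ofReal_intCast, mul_comm (2 * π * Complex.I) (j : ℂ),
    Complex.exp_int_mul_two_pi_mul_I, mul_one, Complex.ofReal_exp]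
  push_cast; ring_nf

lemma mellin_eq_intervalIntegral_latticeSum (h0 : 0 < lam) (h1 : lam < 1) {f : ℝ → ℝ}
    {C : ℝ} (hfc : Continuous f) (hf : BoundedByMinOne f C) :
    mellin (fun t => (f t : ℂ)) (-lam + 2 * π * Complex.I) =
      ∫ u in (0 : ℝ)..1,
        Complex.exp ((-lam + 2 * π * Complex.I) * u) * latticeSum lam f (-u) := by
  have hC := hf.nonneg
  set s : ℂ := -lam + 2 * π * Complex.I
  set H : ℝ → ℂ := fun v => Complex.exp (s * v) * f (exp v)
  have hH : Integrable H := (mellinConvergent_iff_integrable_cexp _ _).1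
    (mellinConvergent_of_boundedByMinOne hfc hf (by simp [s]; linarith) (by simp [s]; linarith))
  have hshift (u : ℝ) (j : ℤ) :
      H (u + j) = Complex.exp (s * u) * latticeTerm lam f (-u) j := by
    have hj : Complex.exp (s * (j : ℝ)) = exp (-lam * j) := cexp_mul_intCast lam j
    simp only [H, latticeTerm, Complex.ofReal_add, mul_add, Complex.exp_add, hj,
      Complex.ofReal_mul, sub_neg_eq_add, add_comm (j : ℝ) u]
    ring
  rw [mellin_eq_integral_cexp]
  refine hH.hasSum_intervalIntegral_comp_add_int.unique ?_
  simp only [hshift]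
  refine intervalIntegral.hasSum_integral_of_dominated_convergence
    (fun j _ => C * latticeTerm lam (min 1) (-1) j) (fun j => ?_) (fun j => ?_) ?_ ?_ ?_
  · exact (by unfold latticeTerm; fun_prop : Continuous fun u : ℝ => Complex.exp (s * u) *
      latticeTerm lam f (-u) j).aestronglyMeasurable
  · refine ae_of_all _ fun u hu => ?_
    rw [uIoc_of_le zero_le_one] at hu
    have hexp : ‖Complex.exp (s * u)‖ ≤ 1 := by
      rw [Complex.norm_exp]; simp [s]; nlinarith [hu.1]
    calc ‖Complex.exp (s * u) * latticeTerm lam f (-u) j‖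
        ≤ 1 * |latticeTerm lam f (-u) j| := by
          rw [norm_mul, Complex.norm_real, Real.norm_eq_abs]; gcongr
      _ ≤ C * latticeTerm lam (min 1) (-u) j :=
          (one_mul _).trans_le (abs_latticeTerm_le hf _ j)
      _ ≤ C * latticeTerm lam (min 1) (-1) j :=
          mul_le_mul_of_nonneg_left (latticeTerm_min_one_antitone lam j (by linarith [hu.2])) hC
  · exact ae_of_all _ fun _ _ => (summable_latticeTerm_min_one h0 h1 _).mul_left C
  · exact intervalIntegrable_const
  · refine ae_of_all _ fun u _ => ?_
    exact (Complex.hasSum_ofReal.2 (summable_latticeTerm h0 h1 hf (-u)).hasSum).mul_left _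

theorem exists_latticeSum_mul_exp_neg_ne_mul (h0 : 0 < lam) (h1 : lam < 1) (c : ℝ) :
    ∃ α ∈ Ico (0 : ℝ) 1, latticeSum lam (fun x => x * exp (-x)) α ≠
      c * latticeSum lam (fun x => 1 - exp (-x)) α := by
  by_contra! h
  set s : ℂ := -lam + 2 * π * Complex.I
  have hs0 : -1 < s.re := by simp [s]; linarith
  have hs1 : s.re < 0 := by simp [s]; linarith
  have hB := boundedByMinOne_mul_exp_neg
  have hA := boundedByMinOne_one_sub_exp_neg
  have hzero : ∀ α, latticeSum lam (fun x => x * exp (-x) - c * (1 - exp (-x))) α = 0 :=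
    latticeSum_eq_zero_of_forall_Ico fun α hα => by
      rw [latticeSum_sub_mul h0 h1 hB hA, h α hα, sub_self]
  have hmellin := (hasMellin_sub (mellinConvergent_of_boundedByMinOne (by fun_prop) hB hs0 hs1)
    ((mellinConvergent_of_boundedByMinOne (by fun_prop) hA hs0 hs1).const_smul (c : ℂ))).2
  have hs : s ≠ 0 := fun h => by simp [h] at hs1
  rw [mellin_const_smul, mellin_mul_exp_neg hs0, mellin_one_sub_exp_neg hs0 hs1,
    Complex.Gamma_add_one s hs] at hmellin
  have hunfold := mellin_eq_intervalIntegral_latticeSum h0 h1 (by fun_prop) (hB.sub_mul hA c)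
  simp only [hzero, Complex.ofReal_zero, mul_zero, intervalIntegral.integral_zero] at hunfold
  have hΓ : Complex.Gamma s ≠ 0 :=
    Complex.Gamma_ne_zero fun m hm => by simpa [s] using congrArg Complex.im hm
  have hsc : s + c ≠ 0 := fun hsc => by simpa [s] using congrArg Complex.im hsc
  refine mul_ne_zero hΓ hsc ?_
  calc Complex.Gamma s * (s + c) = s * Complex.Gamma s - (c : ℂ) • -Complex.Gamma s := by
        rw [smul_eq_mul]; ring
    _ = mellin (fun t => ((t * exp (-t) - c * (1 - exp (-t)) : ℝ) : ℂ)) s := by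
        rw [← hmellin]; congr 1 with t; push_cast; rw [smul_eq_mul]
    _ = 0 := hunfold

lemma tendsto_tsum_nat_add_one_sub {T : ℤ → ℝ} (hT : Summable T) :
    Tendsto (fun n : ℕ => ∑' k : ℕ, T (k + 1 - n)) atTop (𝓝 (∑' j, T j)) := by
  have hsplit (n : ℕ) :
      ∑' j, T j = ∑' k : ℕ, T (k + 1 - n) + ∑' k : ℕ, T (-(k + n : ℕ)) := by
    have hT' : Summable fun j : ℤ => T (j + (1 - n)) :=
      (Equiv.addRight (1 - (n : ℤ))).summable_iff.2 hT
    have hneg : Function.Injective fun k : ℕ => -((k : ℤ) + 1) := fun a b h => by simpa using h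
    have h := tsum_of_nat_of_neg_add_one (f := fun j : ℤ => T (j + (1 - n)))
      (hT'.comp_injective Nat.cast_injective) (hT'.comp_injective hneg)
    rw [← (Equiv.addRight (1 - (n : ℤ))).tsum_eq]
    refine h.trans (congrArg₂ _ (tsum_congr fun k => congrArg T ?_)
      (tsum_congr fun k => congrArg T ?_))
    · ring
    · push_cast; ring
  have h := (tendsto_const_nhds (x := ∑' j, T j)).sub (tendsto_sum_nat_add fun k : ℕ => T (-k))
  rw [sub_zero] at h
  exact h.congr fun n => by rw [hsplit n, add_sub_cancel_right]

lemma tsum_geometric_mul_comp_eq (p lam α : ℝ) (f : ℝ → ℝ) (n : ℕ) :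
    ∑' k : ℕ, p * exp (-lam) ^ k * f (exp (-n - α) * exp ((k + 1 : ℕ) : ℝ)) =
      p * exp (lam * (1 - n)) * ∑' k : ℕ, latticeTerm lam f α (k + 1 - n) := by
  rw [← tsum_mul_left]
  refine tsum_congr fun k => ?_
  simp only [latticeTerm]
  push_cast
  rw [← exp_add, ← exp_nat_mul, mul_assoc p, mul_assoc p, ← mul_assoc (exp (lam * (1 - n))),
    ← exp_add]
  ring_nf

section Geometric

variable {Ω : Type*} [MeasurableSpace Ω] {μ : Measure Ω}

lemma hasSum_geometric_law {p : ℝ} (hp0 : 0 < p) (hp1 : p ≤ 1) :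
    HasSum (fun k : ℕ => p * (1 - p) ^ k) 1 := by
  simpa [hp0.ne'] using
    (hasSum_geometric_of_lt_one (by linarith) (by linarith : 1 - p < 1)).mul_left p

lemma measure_setOf_eq_zero_of_geometric [IsProbabilityMeasure μ] {p : ℝ} (hp0 : 0 < p)
    (hp1 : p ≤ 1) {G : Ω → ℕ} (hGm : Measurable G)
    (hG : ∀ k : ℕ, 1 ≤ k → μ {ω | G ω = k} = ENNReal.ofReal (p * (1 - p) ^ (k - 1))) :
    μ {ω | G ω = 0} = 0 := by
  have htotal := tsum_measure_preimage_singleton (μ := μ) countable_univ (f := G)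
    (fun k _ => hGm (measurableSet_singleton k))
  rw [tsum_univ (f := fun k => μ (G ⁻¹' {k})), preimage_univ, measure_univ,
    tsum_eq_zero_add' ENNReal.summable] at htotal
  have htail : ∑' k : ℕ, μ (G ⁻¹' {k + 1}) = 1 := by
    calc ∑' k : ℕ, μ (G ⁻¹' {k + 1}) = ∑' k : ℕ, ENNReal.ofReal (p * (1 - p) ^ k) :=
          tsum_congr fun k => hG (k + 1) le_add_self
      _ = 1 := by
          rw [← ENNReal.ofReal_tsum_of_nonneg (fun k => by positivity)
            (hasSum_geometric_law hp0 hp1).summable, (hasSum_geometric_law hp0 hp1).tsum_eq,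
            ENNReal.ofReal_one]
  rw [htail] at htotal
  exact (ENNReal.add_left_inj ENNReal.one_ne_top).1 (htotal.trans (zero_add 1).symm)

lemma integral_comp_eq_tsum_geometric [IsProbabilityMeasure μ] {p : ℝ} (hp0 : 0 < p)
    (hp1 : p ≤ 1) {G : Ω → ℕ} (hGm : Measurable G)
    (hG : ∀ k : ℕ, 1 ≤ k → μ {ω | G ω = k} = ENNReal.ofReal (p * (1 - p) ^ (k - 1)))
    {h : ℕ → ℝ} {C : ℝ} (hh : ∀ k, |h k| ≤ C) :
    ∫ ω, h (G ω) ∂μ = ∑' k : ℕ, p * (1 - p) ^ k * h (k + 1) := by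
  have hmap (k : ℕ) : (μ.map G).real {k} = μ.real {ω | G ω = k} :=
    map_measureReal_apply hGm (measurableSet_singleton k)
  have hweight (k : ℕ) : (μ.map G).real {k + 1} = p * (1 - p) ^ k := by
    rw [hmap, measureReal_def, hG (k + 1) le_add_self, ENNReal.toReal_ofReal (by positivity),
      Nat.add_sub_cancel]
  have hint : Integrable h (μ.map G) :=
    (integrable_const C).mono' (.of_discrete) (ae_of_all _ hh)
  rw [← integral_map hGm.aemeasurable (.of_discrete), integral_countable hint,
    tsum_eq_zero_add', hmap, measureReal_def, measure_setOf_eq_zero_of_geometric hp0 hp1 hGm hG]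
  · simp only [hweight, ENNReal.toReal_zero, smul_eq_mul, zero_mul, zero_add]
  · refine .of_norm_bounded ((hasSum_geometric_law hp0 hp1).summable.mul_right C) fun k => ?_
    rw [hweight, smul_eq_mul, norm_mul, Real.norm_of_nonneg (by positivity), Real.norm_eq_abs]
    exact mul_le_mul_of_nonneg_left (hh _) (by positivity)

lemma hasDerivAt_integral_exp_neg_mul [IsFiniteMeasure μ] {X : Ω → ℝ} (hX : AEMeasurable X μ)
    (hX0 : ∀ ω, 0 ≤ X ω) {s : ℝ} (hs : 0 < s) :
    HasDerivAt (fun s => ∫ ω, exp (-s * X ω) ∂μ)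
      (-∫ ω, X ω * exp (-s * X ω) ∂μ) s := by
  have hsub : Iio 0 ⊆ ProbabilityTheory.integrableExpSet X μ := fun t (ht : t < 0) =>
    (integrable_const 1).mono' (hX.const_mul t).exp.aestronglyMeasurable
      (ae_of_all _ fun ω => by
        rw [Real.norm_of_nonneg (exp_pos _).le, exp_le_one_iff]
        exact mul_nonpos_of_nonpos_of_nonneg ht.le (hX0 ω))
  have hmgf := ProbabilityTheory.hasDerivAt_mgf
    (interior_maximal hsub isOpen_Iio (neg_lt_zero.2 hs))
  exact (hmgf.comp s (hasDerivAt_neg s)).congr_deriv (by simp)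

lemma integral_comp_exp_geometric [IsProbabilityMeasure μ] {lam p : ℝ} (h0 : 0 < lam)
    (hp : p = 1 - exp (-lam)) {G : Ω → ℕ} (hGm : Measurable G)
    (hG : ∀ k : ℕ, 1 ≤ k → μ {ω | G ω = k} = ENNReal.ofReal (p * (1 - p) ^ (k - 1)))
    {f : ℝ → ℝ} {C : ℝ} (hf : BoundedByMinOne f C) (α : ℝ) (n : ℕ) :
    ∫ ω, f (exp (-n - α) * exp (G ω)) ∂μ =
      p * exp (lam * (1 - n)) * ∑' k : ℕ, latticeTerm lam f α (k + 1 - n) := by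
  have hq : 1 - p = exp (-lam) := by rw [hp]; ring
  have hp0 : 0 < p := by rw [hp, sub_pos, exp_lt_one_iff]; linarith
  rw [← tsum_geometric_mul_comp_eq, ← hq]
  exact integral_comp_eq_tsum_geometric (h := fun k : ℕ => f (exp (-n - α) * exp k)) hp0
    (by linarith [exp_pos (-lam)]) hGm hG fun k => hf.abs_le (by positivity)

lemma neg_mul_deriv_div_one_sub_eq [IsProbabilityMeasure μ] {lam p : ℝ} (h0 : 0 < lam)
    (hp : p = 1 - exp (-lam)) {G : Ω → ℕ} (hGm : Measurable G)
    (hG : ∀ k : ℕ, 1 ≤ k → μ {ω | G ω = k} = ENNReal.ofReal (p * (1 - p) ^ (k - 1)))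
    {g : ℝ → ℝ} (hg : ∀ s, g s = ∫ ω, exp (-s * exp (G ω)) ∂μ) (α : ℝ) (n : ℕ) :
    -(exp (-n - α) * deriv g (exp (-n - α))) / (1 - g (exp (-n - α))) =
      (∑' k : ℕ, latticeTerm lam (fun x => x * exp (-x)) α (k + 1 - n)) /
        ∑' k : ℕ, latticeTerm lam (fun x => 1 - exp (-x)) α (k + 1 - n) := by
  set s := exp (-n - α)
  have hXm : Measurable fun ω => exp (G ω : ℝ) :=
    measurable_exp.comp (Measurable.of_discrete.comp hGm)
  have hderiv : deriv g s = -∫ ω, exp (G ω) * exp (-s * exp (G ω)) ∂μ := by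
    rw [funext hg]
    exact (hasDerivAt_integral_exp_neg_mul hXm.aemeasurable (fun _ => (exp_pos _).le)
      (exp_pos _)).deriv
  have hnum : -(s * deriv g s) = ∫ ω, s * exp (G ω) * exp (-(s * exp (G ω))) ∂μ := by
    rw [hderiv, mul_neg, neg_neg, ← integral_const_mul]
    congr 1 with ω
    ring_nf
  have hden : 1 - g s = ∫ ω, 1 - exp (-(s * exp (G ω))) ∂μ := by
    rw [integral_sub (integrable_const 1), hg]
    · simp [neg_mul]
    · refine (integrable_const 1).mono' (hXm.const_mul s).neg.exp.aestronglyMeasurable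
        (ae_of_all _ fun ω => ?_)
      rw [Real.norm_of_nonneg (exp_pos _).le, exp_le_one_iff, neg_nonpos]
      positivity
  rw [hnum, hden, integral_comp_exp_geometric h0 hp hGm hG boundedByMinOne_mul_exp_neg,
    integral_comp_exp_geometric h0 hp hGm hG boundedByMinOne_one_sub_exp_neg, mul_div_mul_left]
  have hp0 : 0 < p := by rw [hp, sub_pos, exp_lt_one_iff]; linarith
  positivity

end Geometric

lemma tendsto_exp_neg_natCast_sub (α : ℝ) :
    Tendsto (fun n : ℕ => exp (-n - α)) atTop (𝓝[>] 0) :=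
  tendsto_nhdsWithin_iff.2 ⟨tendsto_exp_atBot.comp (tendsto_atBot_add_const_right _ _
    (tendsto_neg_atTop_atBot.comp tendsto_natCast_atTop_atTop)), .of_forall fun _ => exp_pos _⟩

end GeometricLaplace

open GeometricLaplace

/-- For `X = e^G` with `G` geometric of parameter `p = 1-e^{-λ}`, `λ ∈ (0,1)`, the limit
`lim_{s→0+} -s g'(s)/(1-g(s))` does not exist; along `s_n = e^{-n-α}` the limit `L_α` exists
for each `α ∈ [0,1)` and `α ↦ L_α` is non-constant. -/
theorem stmt14 {Ω : Type*} [MeasurableSpace Ω] (μ : Measure Ω) [IsProbabilityMeasure μ]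
    (lam : ℝ) (hlam : lam ∈ Set.Ioo (0 : ℝ) 1) (p : ℝ) (hp : p = 1 - Real.exp (-lam))
    (G : Ω → ℕ) (hGm : Measurable G)
    (hG : ∀ k : ℕ, 1 ≤ k → μ {ω | G ω = k} = ENNReal.ofReal (p * (1 - p) ^ (k - 1)))
    (g : ℝ → ℝ) (hg : ∀ s, g s = ∫ ω, Real.exp (-s * Real.exp (G ω)) ∂μ) :
    (¬ ∃ l : ℝ, Filter.Tendsto (fun s => -(s * deriv g s) / (1 - g s))
        (nhdsWithin 0 (Set.Ioi 0)) (nhds l)) ∧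
      ∃ Lfun : ℝ → ℝ,
        (∀ α ∈ Set.Ico (0 : ℝ) 1,
          Filter.Tendsto
            (fun n : ℕ =>
              -(Real.exp (-(n : ℝ) - α) * deriv g (Real.exp (-(n : ℝ) - α))) /
                (1 - g (Real.exp (-(n : ℝ) - α))))
            Filter.atTop (nhds (Lfun α))) ∧
        ∃ α ∈ Set.Ico (0 : ℝ) 1, ∃ β ∈ Set.Ico (0 : ℝ) 1, Lfun α ≠ Lfun β := by
  obtain ⟨h0, h1⟩ := hlam
  set A := latticeSum lam fun x => 1 - exp (-x)
  set B := latticeSum lam fun x => x * exp (-x)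
  have hA (α : ℝ) : 0 < A α :=
    latticeSum_pos h0 h1 boundedByMinOne_one_sub_exp_neg
      (fun x hx => sub_pos.2 (exp_lt_one_iff.2 (neg_lt_zero.2 hx))) α
  have hlim (α : ℝ) : Tendsto (fun n : ℕ => -(exp (-n - α) * deriv g (exp (-n - α))) /
      (1 - g (exp (-n - α)))) atTop (𝓝 (B α / A α)) := by
    simp_rw [neg_mul_deriv_div_one_sub_eq h0 hp hGm hG hg α]
    exact (tendsto_tsum_nat_add_one_sub
      (summable_latticeTerm h0 h1 boundedByMinOne_mul_exp_neg α)).div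
      (tendsto_tsum_nat_add_one_sub
        (summable_latticeTerm h0 h1 boundedByMinOne_one_sub_exp_neg α)) (hA α).ne'
  obtain ⟨α, hα, hne⟩ := exists_latticeSum_mul_exp_neg_ne_mul h0 h1 (B 0 / A 0)
  have hne' : B α / A α ≠ B 0 / A 0 := fun h =>
    hne (by rw [← h, div_mul_cancel₀ _ (hA α).ne'])
  refine ⟨fun ⟨l, hl⟩ => hne' ?_, fun α => B α / A α, fun α _ => hlim α, α, hα, 0,
    ⟨le_rfl, one_pos⟩, hne'⟩
  exact (tendsto_nhds_unique (hlim α) (hl.comp (tendsto_exp_neg_natCast_sub α))).trans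
    (tendsto_nhds_unique (hlim 0) (hl.comp (tendsto_exp_neg_natCast_sub 0))).symm
end

section
/- Let w : (0,∞) → [0,∞) be a continuous function such that lim_{s→0+} s·w(s) = c₀ and w is the Laplace transform of a Radon measure t on [0,∞), i.e., w(s) = ∫_{[0,∞)} e^{-sx} t(dx). Then the distribution function U(y) = t([0,y]) satisfies lim_{y→∞} U(y)/y = c₀. Conversely, if U(y)/y → c₀ then s·w(s) → c₀ as s → 0+. -/
/-!
Write `U y = t [0, y]`. By Tonelli, `∫ e^{-sx} t(dx) = ∫₀^∞ e^{-v} U(v/s) dv`. If `U y / y → c`,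
then `s U(v/s) → c v` for each `v` with a bound linear in `v`, so dominated convergence gives
`s w(s) → c ∫₀^∞ v e^{-v} dv = c`.

Conversely (Karamata), `s w(s) → c` gives `s w(k s) → c / k` for all `k > 0`, that is,
`s ∫ g(e^{-sx}) e^{-sx} t(dx) → c ∫₀¹ g` for `g = u^{k-1}`. By linearity this holds for
polynomials, then, by Weierstrass approximation and positivity, for continuous `g`. For
`g u = u⁻¹ 1_{[e⁻¹, 1]}(u)` the left side is `s U(1/s)` and `∫₀¹ g = 1`. This `g` is not
continuous, but it lies between continuous functions whose integrals are arbitrarily close to `1`.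
-/

open MeasureTheory Real Set Filter Topology
open scoped ENNReal

theorem tendsto_of_forall_sandwich {α : Type*} {l : Filter α} {f : α → ℝ} {a : ℝ}
    (h : ∀ ε > 0, ∃ g₁ g₂ : α → ℝ, ∃ b₁ b₂, Tendsto g₁ l (𝓝 b₁) ∧
      Tendsto g₂ l (𝓝 b₂) ∧ a - ε ≤ b₁ ∧ b₂ ≤ a + ε ∧ ∀ᶠ x in l, g₁ x ≤ f x ∧ f x ≤ g₂ x) :
    Tendsto f l (𝓝 a) := by
  refine tendsto_order.2 ⟨fun a' ha' => ?_, fun a' ha' => ?_⟩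
  · obtain ⟨g₁, _, b₁, _, hg₁, _, hb₁, _, hgf⟩ := h ((a - a') / 2) (by linarith)
    filter_upwards [hg₁.eventually_const_lt (show a' < b₁ by linarith), hgf] with x h₁ h₂
    exact h₁.trans_le h₂.1
  · obtain ⟨_, g₂, _, b₂, _, hg₂, _, hb₂, hgf⟩ := h ((a' - a) / 2) (by linarith)
    filter_upwards [hg₂.eventually_lt_const (show b₂ < a' by linarith), hgf] with x h₁ h₂
    exact h₂.2.trans_lt h₁

theorem ae_nonneg_of_measure_Iio_eq_zero {t : Measure ℝ} (ht : t (Iio 0) = 0) :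
    ∀ᵐ x ∂t, 0 ≤ x := by
  simpa [ae_iff, Iio] using ht

theorem measure_Iic_eq_measure_Icc {t : Measure ℝ} (ht : t (Iio 0) = 0) (y : ℝ) :
    t (Iic y) = t (Icc 0 y) := by
  rw [← measure_sdiff_null (s := Iic y) ht]
  congr 1
  ext x
  simp [and_comm]

theorem measure_Iic_lt_top_of_integrable_exp {t : Measure ℝ} {s : ℝ} (hs : 0 < s)
    (h : Integrable (fun x => exp (-s * x)) t) (y : ℝ) : t (Iic y) < ⊤ := by
  refine (measure_mono fun x (hx : x ≤ y) => ?_).trans_lt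
    (h.measure_ge_lt_top (exp_pos (-s * y)))
  simp only [mem_ofPred_eq, exp_le_exp]
  nlinarith

theorem lintegral_Ici_exp_neg (a : ℝ) :
    ∫⁻ v in Ici a, ENNReal.ofReal (exp (-v)) = ENNReal.ofReal (exp (-a)) := by
  rw [← restrict_Ioi_eq_restrict_Ici, ← integral_exp_neg_Ioi,
    ofReal_integral_eq_lintegral_ofReal (integrableOn_exp_neg_Ioi a)
      (ae_of_all _ fun v => (exp_pos _).le)]

theorem integrableOn_exp_neg_mul_self : IntegrableOn (fun v => exp (-v) * v) (Ioi 0) := by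
  have := GammaIntegral_convergent two_pos
  norm_num at this
  exact this

theorem integral_exp_neg_mul_self : ∫ v in Ioi 0, exp (-v) * v = 1 := by
  have := Gamma_eq_integral two_pos
  norm_num at this
  exact this.symm

theorem lintegral_exp_neg_mul_eq_lintegral_measure_Iic (t : Measure ℝ) [SFinite t] {s : ℝ}
    (hs : 0 < s) :
    ∫⁻ x, ENNReal.ofReal (exp (-s * x)) ∂t
      = ∫⁻ v, ENNReal.ofReal (exp (-v)) * t (Iic (v / s)) := by
  let F : ℝ × ℝ → ℝ≥0∞ :=
    {p | p.1 ≤ p.2 / s}.indicator fun p => ENNReal.ofReal (exp (-p.2))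
  have hF : Measurable F :=
    (by fun_prop : Measurable fun p : ℝ × ℝ => ENNReal.ofReal (exp (-p.2))).indicator
      (measurableSet_le measurable_fst (measurable_snd.div_const s))
  have hx : ∀ x, ENNReal.ofReal (exp (-s * x)) = ∫⁻ v, F (x, v) := by
    intro x
    rw [neg_mul, ← lintegral_Ici_exp_neg, ← lintegral_indicator measurableSet_Ici]
    congr 1 with v
    simp [F, indicator_apply, le_div_iff₀ hs, mul_comm]
  have hv : ∀ v, ∫⁻ x, F (x, v) ∂t = ENNReal.ofReal (exp (-v)) * t (Iic (v / s)) := by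
    intro v
    rw [← lintegral_indicator_const measurableSet_Iic]
    rfl
  simp_rw [hx, ← hv]
  exact lintegral_lintegral_swap (f := fun x v => F (x, v)) hF.aemeasurable

theorem integral_exp_neg_mul_eq_integral_measureReal_Iic {t : Measure ℝ} [SFinite t]
    (ht : t (Iio 0) = 0) (hfin : ∀ y, t (Iic y) ≠ ⊤) {s : ℝ} (hs : 0 < s) :
    ∫ x, exp (-s * x) ∂t = ∫ v in Ioi 0, exp (-v) * t.real (Iic (v / s)) := by
  have hmono : Monotone fun v => t.real (Iic (v / s)) := fun v v' h =>
    measureReal_mono (Iic_subset_Iic.2 (div_le_div_of_nonneg_right h hs.le)) (hfin _)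
  have hzero : ∀ᵐ v, v ∉ Ioi 0 → exp (-v) * t.real (Iic (v / s)) = 0 := by
    filter_upwards [compl_mem_ae_iff.2 (measure_singleton (0 : ℝ))] with v (hv : v ≠ 0) hv'
    have hv0 : v / s < 0 := div_neg_of_neg_of_pos (lt_of_le_of_ne (not_lt.1 hv') hv) hs
    rw [measureReal_def, measure_mono_null (Iic_subset_Iio.2 hv0) ht, ENNReal.toReal_zero,
      mul_zero]
  rw [setIntegral_eq_integral_of_ae_compl_eq_zero hzero,
    integral_eq_lintegral_of_nonneg_ae (ae_of_all _ fun x => (exp_pos _).le) (by fun_prop),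
    integral_eq_lintegral_of_nonneg_ae (f := fun v => exp (-v) * t.real (Iic (v / s)))
      (ae_of_all _ fun v => by positivity)
      ((by fun_prop : Measurable fun v => exp (-v)).mul hmono.measurable).aestronglyMeasurable,
    lintegral_exp_neg_mul_eq_lintegral_measure_Iic t hs]
  simp_rw [ENNReal.ofReal_mul (exp_pos _).le, measureReal_def, ENNReal.ofReal_toReal (hfin _)]

theorem exists_abs_le_add_mul_of_tendsto_div {f : ℝ → ℝ} (hf : Monotone f) {c : ℝ}
    (hfc : Tendsto (fun y => f y / y) atTop (𝓝 c)) :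
    ∃ A B, 0 ≤ A ∧ ∀ y, 0 ≤ y → |f y| ≤ A + B * y := by
  obtain ⟨M, hM⟩ := eventually_atTop.1 <|
    (hfc.eventually (Metric.closedBall_mem_nhds c one_pos)).and (eventually_gt_atTop 0)
  refine ⟨|f 0| + |f M|, |c| + 1, by positivity, fun y hy => ?_⟩
  rcases le_total y M with hyM | hMy
  · have := hf hy
    have := hf hyM
    have : 0 ≤ (|c| + 1) * y := by positivity
    rw [abs_le] at *
    constructor <;> cases abs_cases (f 0) <;> cases abs_cases (f M) <;> linarith
  · obtain ⟨hball, hy0⟩ := hM y hMy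
    have hdiv : |f y / y| ≤ |c| + 1 := by
      have := abs_sub_abs_le_abs_sub (f y / y) c
      rw [Real.dist_eq] at hball
      linarith
    rw [abs_div, abs_of_pos hy0, div_le_iff₀ hy0] at hdiv
    have : 0 ≤ |f 0| + |f M| := by positivity
    linarith

theorem tendsto_integral_exp_neg_mul_mul_div {f : ℝ → ℝ} (hf : Monotone f) {c : ℝ}
    (hfc : Tendsto (fun y => f y / y) atTop (𝓝 c)) :
    Tendsto (fun s => ∫ v in Ioi 0, exp (-v) * (s * f (v / s))) (𝓝[>] 0) (𝓝 c) := by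
  obtain ⟨A, B, hA, hAB⟩ := exists_abs_le_add_mul_of_tendsto_div hf hfc
  have hlim : ∫ v in Ioi 0, exp (-v) * (v * c) = c := by
    simp_rw [← mul_assoc, integral_mul_const, integral_exp_neg_mul_self, one_mul]
  rw [← hlim]
  refine tendsto_integral_filter_of_dominated_convergence
    (fun v => A * exp (-v) + B * (exp (-v) * v)) (Eventually.of_forall fun s => ?_) ?_ ?_ ?_
  · exact (by fun_prop : Continuous fun v => exp (-v)).aestronglyMeasurable.mul
      ((hf.measurable.comp (measurable_id.div_const s)).const_mul s).aestronglyMeasurable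
  · filter_upwards [Ioc_mem_nhdsGT one_pos] with s ⟨hs0, hs1⟩
    refine (ae_restrict_iff' measurableSet_Ioi).2 (ae_of_all _ fun v (hv : 0 < v) => ?_)
    have hbound := hAB (v / s) (by positivity)
    rw [norm_mul, Real.norm_of_nonneg (exp_pos _).le, Real.norm_eq_abs, abs_mul, abs_of_pos hs0]
    calc exp (-v) * (s * |f (v / s)|) ≤ exp (-v) * (A + B * v) := by
          gcongr
          calc s * |f (v / s)| ≤ s * (A + B * (v / s)) := by gcongr
            _ = s * A + B * v := by field_simp
            _ ≤ A + B * v := by nlinarith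
      _ = A * exp (-v) + B * (exp (-v) * v) := by ring
  · exact ((integrableOn_exp_neg_Ioi 0).const_mul A).add
      (integrableOn_exp_neg_mul_self.const_mul B)
  · refine (ae_restrict_iff' measurableSet_Ioi).2 (ae_of_all _ fun v (hv : 0 < v) => ?_)
    refine Tendsto.const_mul _ ?_
    have hdiv : Tendsto (fun s => v / s) (𝓝[>] 0) atTop := by
      simpa only [div_eq_mul_inv] using tendsto_inv_nhdsGT_zero.const_mul_atTop hv
    refine ((hfc.comp hdiv).const_mul v).congr' ?_
    filter_upwards [self_mem_nhdsWithin] with s (hs : 0 < s)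
    simp only [Function.comp]
    field_simp

/-- Zero up to `a`, `u⁻¹` from `a'` on: a continuous minorant or majorant of `u⁻¹ 1_{[e⁻¹, 1]}`
for `a = e⁻¹` or `a' = e⁻¹` respectively. -/
noncomputable def rampInv (a a' u : ℝ) : ℝ :=
  min 1 (max 0 ((u - a) / (a' - a))) / max u a'

section rampInv

variable {a a' u : ℝ}

theorem continuous_rampInv (ha' : 0 < a') : Continuous (rampInv a a') :=
  (by fun_prop : Continuous fun u => min 1 (max 0 ((u - a) / (a' - a)))).div (by fun_prop)
    fun u => (ha'.trans_le (le_max_right u a')).ne'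

theorem rampInv_nonneg (ha' : 0 < a') : 0 ≤ rampInv a a' u :=
  div_nonneg (le_min zero_le_one (le_max_left _ _)) (ha'.le.trans (le_max_right _ _))

theorem rampInv_le (ha' : 0 < a') : rampInv a a' u ≤ (max u a')⁻¹ := by
  rw [rampInv, div_eq_mul_inv]
  exact mul_le_of_le_one_left (inv_nonneg.2 (ha'.le.trans (le_max_right _ _))) (min_le_left _ _)

theorem rampInv_of_le (haa : a ≤ a') (hu : u ≤ a) : rampInv a a' u = 0 := by
  rw [rampInv, max_eq_left (div_nonpos_of_nonpos_of_nonneg (by linarith) (by linarith)),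
    min_eq_right zero_le_one, zero_div]

theorem rampInv_of_ge (haa : a < a') (hu : a' ≤ u) : rampInv a a' u = u⁻¹ := by
  have h : 1 ≤ (u - a) / (a' - a) := by rw [le_div_iff₀ (by linarith)]; linarith
  rw [rampInv, max_eq_right (zero_le_one.trans h), min_eq_left h, max_eq_left hu, one_div]

theorem rampInv_mul_le_indicator (haa : a ≤ a') (ha' : 0 < a') (hu : 0 < u) :
    rampInv a a' u * u ≤ (Ici a).indicator 1 u := by
  by_cases hau : a ≤ u
  · rw [indicator_of_mem (mem_Ici.2 hau), Pi.one_apply]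
    calc rampInv a a' u * u ≤ (max u a')⁻¹ * max u a' :=
          mul_le_mul (rampInv_le ha') (le_max_left _ _) hu.le
            (inv_nonneg.2 (ha'.le.trans (le_max_right _ _)))
      _ = 1 := inv_mul_cancel₀ (ha'.trans_le (le_max_right _ _)).ne'
  · rw [indicator_of_notMem (by simpa using hau), rampInv_of_le haa (not_le.1 hau).le, zero_mul]

theorem indicator_le_rampInv_mul (haa : a < a') (ha' : 0 < a') (hu : 0 ≤ u) :
    (Ici a').indicator 1 u ≤ rampInv a a' u * u := by
  by_cases hau : a' ≤ u
  · rw [indicator_of_mem (mem_Ici.2 hau), Pi.one_apply, rampInv_of_ge haa hau,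
      inv_mul_cancel₀ (ha'.trans_le hau).ne']
  · rw [indicator_of_notMem (by simpa using hau)]
    exact mul_nonneg (rampInv_nonneg ha') hu

theorem integral_rampInv_of_ge (haa : a < a') (ha' : 0 < a') (ha'1 : a' ≤ 1) :
    ∫ u in a'..1, rampInv a a' u = log (1 / a') := by
  rw [← integral_inv_of_pos ha' one_pos]
  refine intervalIntegral.integral_congr fun u hu => ?_
  rw [uIcc_of_le ha'1] at hu
  exact rampInv_of_ge haa hu.1

theorem integral_rampInv_le (ha : 0 ≤ a) (haa : a < a') (ha'1 : a' ≤ 1) :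
    ∫ u in (0 : ℝ)..1, rampInv a a' u ≤ (a' - a) / a' + log (1 / a') := by
  have ha' : 0 < a' := ha.trans_lt haa
  have hi : ∀ p q : ℝ, IntervalIntegrable (rampInv a a') volume p q :=
    fun p q => (continuous_rampInv ha').intervalIntegrable p q
  rw [← intervalIntegral.integral_add_adjacent_intervals (hi 0 a) (hi a 1),
    ← intervalIntegral.integral_add_adjacent_intervals (hi a a') (hi a' 1),
    integral_rampInv_of_ge haa ha' ha'1]
  have h₁ : ∫ u in (0 : ℝ)..a, rampInv a a' u = 0 := by
    rw [intervalIntegral.integral_congr (g := fun _ => 0) fun u hu => ?_,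
      intervalIntegral.integral_zero]
    rw [uIcc_of_le ha] at hu
    exact rampInv_of_le haa.le hu.2
  have h₂ : ∫ u in a..a', rampInv a a' u ≤ (a' - a) / a' := by
    calc ∫ u in a..a', rampInv a a' u ≤ ∫ _ in a..a', a'⁻¹ :=
          intervalIntegral.integral_mono_on haa.le (hi a a') intervalIntegrable_const
            fun u _ => (rampInv_le ha').trans (inv_anti₀ ha' (le_max_right _ _))
      _ = (a' - a) / a' := by simp [div_eq_mul_inv]
  linarith

theorem log_one_div_le_integral_rampInv (haa : a < a') (ha' : 0 < a') (ha'1 : a' ≤ 1) :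
    log (1 / a') ≤ ∫ u in (0 : ℝ)..1, rampInv a a' u := by
  have hi : ∀ p q : ℝ, IntervalIntegrable (rampInv a a') volume p q :=
    fun p q => (continuous_rampInv ha').intervalIntegrable p q
  rw [← intervalIntegral.integral_add_adjacent_intervals (hi 0 a') (hi a' 1),
    integral_rampInv_of_ge haa ha' ha'1]
  exact le_add_of_nonneg_left
    (intervalIntegral.integral_nonneg ha'.le fun u _ => rampInv_nonneg ha')

end rampInv

section Karamata

variable {t : Measure ℝ} {c : ℝ}

theorem ae_exp_neg_mul_mem_Icc (ht : t (Iio 0) = 0) {s : ℝ} (hs : 0 ≤ s) :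
    ∀ᵐ x ∂t, exp (-s * x) ∈ Icc 0 1 := by
  filter_upwards [ae_nonneg_of_measure_Iio_eq_zero ht] with x hx
  exact ⟨(exp_pos _).le, exp_le_one_iff.2 (by nlinarith)⟩

theorem integrable_comp_exp_neg_mul_mul (ht : t (Iio 0) = 0) {s : ℝ} (hs : 0 ≤ s)
    (hint : Integrable (fun x => exp (-s * x)) t) {g : ℝ → ℝ} (hg : Continuous g) :
    Integrable (fun x => g (exp (-s * x)) * exp (-s * x)) t := by
  obtain ⟨C, hC⟩ :=
    (isCompact_Icc (a := 0) (b := 1)).exists_bound_of_continuousOn hg.continuousOn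
  refine hint.bdd_mul (c := C) (by fun_prop) ?_
  filter_upwards [ae_exp_neg_mul_mem_Icc ht hs] with x hx using hC _ hx

theorem integral_comp_exp_neg_mul_mul_mono (ht : t (Iio 0) = 0) {s : ℝ} (hs : 0 ≤ s)
    (hint : Integrable (fun x => exp (-s * x)) t) {g₁ g₂ : ℝ → ℝ}
    (hg₁ : Continuous g₁) (hg₂ : Continuous g₂) (hle : ∀ u ∈ Icc (0 : ℝ) 1, g₁ u ≤ g₂ u) :
    ∫ x, g₁ (exp (-s * x)) * exp (-s * x) ∂t
      ≤ ∫ x, g₂ (exp (-s * x)) * exp (-s * x) ∂t := by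
  refine integral_mono_ae (integrable_comp_exp_neg_mul_mul ht hs hint hg₁)
    (integrable_comp_exp_neg_mul_mul ht hs hint hg₂) ?_
  filter_upwards [ae_exp_neg_mul_mem_Icc ht hs] with x hx
  exact mul_le_mul_of_nonneg_right (hle _ hx) (exp_pos _).le

theorem tendsto_mul_integral_exp_neg_const_mul_mul
    (hA : Tendsto (fun s => s * ∫ x, exp (-s * x) ∂t) (𝓝[>] 0) (𝓝 c)) {k : ℝ}
    (hk : 0 < k) :
    Tendsto (fun s => s * ∫ x, exp (-(k * s) * x) ∂t) (𝓝[>] 0) (𝓝 (c / k)) := by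
  have hks : Tendsto (fun s => k * s) (𝓝[>] 0) (𝓝[>] 0) :=
    tendsto_nhdsWithin_iff.2
      ⟨((continuous_const_mul k).tendsto' 0 0 (mul_zero k)).mono_left nhdsWithin_le_nhds,
        by filter_upwards [self_mem_nhdsWithin] with s (hs : 0 < s) using mul_pos hk hs⟩
  refine ((hA.comp hks).div_const k).congr' (Eventually.of_forall fun s => ?_)
  simp only [Function.comp]
  field_simp

theorem tendsto_mul_integral_eval_exp_neg_mul (ht : t (Iio 0) = 0)
    (hint : ∀ s, 0 < s → Integrable (fun x => exp (-s * x)) t)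
    (hA : Tendsto (fun s => s * ∫ x, exp (-s * x) ∂t) (𝓝[>] 0) (𝓝 c))
    (p : Polynomial ℝ) :
    Tendsto (fun s => s * ∫ x, p.eval (exp (-s * x)) * exp (-s * x) ∂t) (𝓝[>] 0)
      (𝓝 (c * ∫ u in (0 : ℝ)..1, p.eval u)) := by
  induction p using Polynomial.induction_on' with
  | add p q hp hq =>
    have hlim : c * ∫ u in (0 : ℝ)..1, (p + q).eval u
        = (c * ∫ u in (0 : ℝ)..1, p.eval u) + c * ∫ u in (0 : ℝ)..1, q.eval u := by
      simp only [Polynomial.eval_add]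
      rw [intervalIntegral.integral_add (p.continuous.intervalIntegrable 0 1)
        (q.continuous.intervalIntegrable 0 1), mul_add]
    rw [hlim]
    refine (hp.add hq).congr' ?_
    filter_upwards [self_mem_nhdsWithin] with s (hs : 0 < s)
    simp only [Polynomial.eval_add, add_mul]
    rw [integral_add (integrable_comp_exp_neg_mul_mul ht hs.le (hint s hs) p.continuous)
      (integrable_comp_exp_neg_mul_mul ht hs.le (hint s hs) q.continuous), mul_add]
  | monomial n a =>
    have hlim :
        c * ∫ u in (0 : ℝ)..1, (Polynomial.monomial n a).eval u = a * (c / (n + 1)) := by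
      simp only [Polynomial.eval_monomial]
      rw [intervalIntegral.integral_const_mul, integral_pow, one_pow,
        zero_pow n.succ_ne_zero, sub_zero]
      ring
    rw [hlim]
    refine ((tendsto_mul_integral_exp_neg_const_mul_mul hA (by positivity)).const_mul a).congr'
      (Eventually.of_forall fun s => ?_)
    have hexp : ∀ x, (Polynomial.monomial n a).eval (exp (-s * x)) * exp (-s * x)
        = a * exp (-((n + 1) * s) * x) := by
      intro x
      rw [Polynomial.eval_monomial, mul_assoc, ← pow_succ, ← exp_nat_mul]
      push_cast
      ring_nf
    simp_rw [hexp, integral_const_mul]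
    ring

theorem tendsto_mul_integral_comp_exp_neg_mul_mul (hc : 0 ≤ c) (ht : t (Iio 0) = 0)
    (hint : ∀ s, 0 < s → Integrable (fun x => exp (-s * x)) t)
    (hA : Tendsto (fun s => s * ∫ x, exp (-s * x) ∂t) (𝓝[>] 0) (𝓝 c))
    {g : ℝ → ℝ} (hg : Continuous g) :
    Tendsto (fun s => s * ∫ x, g (exp (-s * x)) * exp (-s * x) ∂t) (𝓝[>] 0)
      (𝓝 (c * ∫ u in (0 : ℝ)..1, g u)) := by
  have hgi : IntervalIntegrable g volume 0 1 := hg.intervalIntegrable 0 1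
  have hcomp : ∀ {g₁ g₂ : ℝ → ℝ}, Continuous g₁ → Continuous g₂ →
      (∀ u ∈ Icc (0 : ℝ) 1, g₁ u ≤ g₂ u) →
      ∀ᶠ s in 𝓝[>] 0, s * ∫ x, g₁ (exp (-s * x)) * exp (-s * x) ∂t
        ≤ s * ∫ x, g₂ (exp (-s * x)) * exp (-s * x) ∂t := fun h₁ h₂ hle => by
    filter_upwards [self_mem_nhdsWithin] with s (hs : 0 < s)
    exact mul_le_mul_of_nonneg_left
      (integral_comp_exp_neg_mul_mul_mono ht hs.le (hint s hs) h₁ h₂ hle) hs.le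
  have hpoly := tendsto_mul_integral_eval_exp_neg_mul ht hint hA
  have hshift : ∀ (p : Polynomial ℝ) (r : ℝ),
      ∫ u in (0 : ℝ)..1, (p + Polynomial.C r).eval u
        = (∫ u in (0 : ℝ)..1, p.eval u) + r := by
    intro p r
    simp [intervalIntegral.integral_add (p.continuous.intervalIntegrable 0 1)
      intervalIntegrable_const]
  refine tendsto_of_forall_sandwich fun ε hε => ?_
  set η := ε / (2 * c + 1)
  have hη : 0 < η := by positivity
  have hcη : 2 * c * η ≤ ε := by
    rw [mul_div_assoc', div_le_iff₀ (by positivity)]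
    nlinarith
  obtain ⟨p, hp⟩ := exists_polynomial_near_of_continuousOn 0 1 g hg.continuousOn η hη
  have hpg : |(∫ u in (0 : ℝ)..1, p.eval u) - ∫ u in (0 : ℝ)..1, g u| ≤ η := by
    rw [← intervalIntegral.integral_sub (p.continuous.intervalIntegrable 0 1) hgi]
    simpa using intervalIntegral.norm_integral_le_of_norm_le_const (a := 0) (b := 1) (C := η)
      (f := fun u => p.eval u - g u) fun u hu =>
        (hp u (Ioc_subset_Icc_self (by simpa using hu))).le
  -- `p - η ≤ g ≤ p + η` on `[0, 1]`
  refine ⟨_, _, _, _, hpoly (p + Polynomial.C (-η)), hpoly (p + Polynomial.C η), ?_, ?_, ?_⟩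
  · rw [hshift]
    nlinarith [abs_le.1 hpg]
  · rw [hshift]
    nlinarith [abs_le.1 hpg]
  refine (hcomp (p + Polynomial.C (-η)).continuous hg fun u hu => ?_).and
    (hcomp hg (p + Polynomial.C η).continuous fun u hu => ?_) <;>
  · simp only [Polynomial.eval_add, Polynomial.eval_C]
    linarith [abs_lt.1 (hp u hu)]

theorem indicator_Ici_exp_neg_one_comp {s : ℝ} (hs : 0 < s) (x : ℝ) :
    (Ici (exp (-1))).indicator (1 : ℝ → ℝ) (exp (-s * x)) = (Iic s⁻¹).indicator 1 x := by
  have h : exp (-1) ≤ exp (-s * x) ↔ x ≤ s⁻¹ := by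
    rw [exp_le_exp, ← one_div, le_div_iff₀ hs]
    constructor <;> intro h <;> linarith
  simp only [indicator_apply, mem_Ici, mem_Iic, h, Pi.one_apply]

theorem integral_rampInv_comp_exp_neg_mul_le_measureReal_Iic {s a' : ℝ} (hs : 0 < s)
    (ha' : exp (-1) ≤ a') (hfin : t (Iic s⁻¹) ≠ ⊤) :
    ∫ x, rampInv (exp (-1)) a' (exp (-s * x)) * exp (-s * x) ∂t ≤ t.real (Iic s⁻¹) := by
  have hint : Integrable ((Iic s⁻¹).indicator (1 : ℝ → ℝ)) t :=
    (integrable_indicator_iff measurableSet_Iic).2 (integrableOn_const hfin)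
  rw [← integral_indicator_one measurableSet_Iic]
  refine integral_mono_of_nonneg (Eventually.of_forall fun x => ?_) hint
    (Eventually.of_forall fun x => ?_)
  · exact mul_nonneg (rampInv_nonneg ((exp_pos _).trans_le ha')) (exp_pos _).le
  · rw [← indicator_Ici_exp_neg_one_comp hs]
    exact rampInv_mul_le_indicator ha' ((exp_pos _).trans_le ha') (exp_pos _)

theorem measureReal_Iic_le_integral_rampInv_comp_exp_neg_mul {s a : ℝ} (hs : 0 < s)
    (ha : a < exp (-1))
    (hint : Integrable (fun x => rampInv a (exp (-1)) (exp (-s * x)) * exp (-s * x)) t) :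
    t.real (Iic s⁻¹) ≤ ∫ x, rampInv a (exp (-1)) (exp (-s * x)) * exp (-s * x) ∂t := by
  rw [← integral_indicator_one measurableSet_Iic]
  refine integral_mono_of_nonneg
    (Eventually.of_forall fun x => indicator_nonneg (fun _ _ => zero_le_one) _) hint
    (Eventually.of_forall fun x => ?_)
  rw [← indicator_Ici_exp_neg_one_comp hs]
  exact indicator_le_rampInv_mul ha (exp_pos _) (exp_pos _).le

theorem tendsto_mul_measureReal_Iic_inv (hc : 0 ≤ c)
    (ht : t (Iio 0) = 0) (hint : ∀ s, 0 < s → Integrable (fun x => exp (-s * x)) t)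
    (hA : Tendsto (fun s => s * ∫ x, exp (-s * x) ∂t) (𝓝[>] 0) (𝓝 c)) :
    Tendsto (fun s => s * t.real (Iic s⁻¹)) (𝓝[>] 0) (𝓝 c) := by
  have hlim : ∀ a a' : ℝ, 0 < a' → Tendsto
      (fun s => s * ∫ x, rampInv a a' (exp (-s * x)) * exp (-s * x) ∂t) (𝓝[>] 0)
      (𝓝 (c * ∫ u in (0 : ℝ)..1, rampInv a a' u)) := fun a a' h =>
    tendsto_mul_integral_comp_exp_neg_mul_mul hc ht hint hA (continuous_rampInv h)
  refine tendsto_of_forall_sandwich fun ε hε => ?_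
  obtain ⟨δ, hδ, hδ1, hcδ⟩ : ∃ δ, 0 < δ ∧ δ ≤ 1 ∧ c * δ ≤ ε := by
    refine ⟨min 1 (ε / (c + 1)), lt_min one_pos (by positivity), min_le_left _ _, ?_⟩
    calc c * min 1 (ε / (c + 1)) ≤ (c + 1) * (ε / (c + 1)) :=
          mul_le_mul (by linarith) (min_le_right _ _) (by positivity) (by linarith)
      _ = ε := by field_simp
  refine ⟨_, _, _, _, hlim (exp (-1)) (exp (δ - 1)) (exp_pos _),
    hlim (exp (-1 - δ)) (exp (-1)) (exp_pos _), ?_, ?_, ?_⟩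
  · have := log_one_div_le_integral_rampInv (a := exp (-1)) (exp_lt_exp.2 (by linarith))
      (exp_pos (δ - 1)) (exp_le_one_iff.2 (by linarith))
    rw [one_div, log_inv, log_exp] at this
    nlinarith
  · have := integral_rampInv_le (a := exp (-1 - δ)) (a' := exp (-1)) (exp_pos _).le
      (exp_lt_exp.2 (by linarith)) (exp_le_one_iff.2 (by norm_num))
    have hexp : (exp (-1) - exp (-1 - δ)) / exp (-1) ≤ δ := by
      rw [sub_div, div_self (exp_pos _).ne', ← exp_sub, show -1 - δ - -1 = -δ by ring]
      linarith [add_one_le_exp (-δ)]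
    rw [one_div, log_inv, log_exp] at this
    nlinarith
  · filter_upwards [self_mem_nhdsWithin] with s (hs : 0 < s)
    have hfin := measure_Iic_lt_top_of_integrable_exp hs (hint s hs) s⁻¹
    have hint' := integrable_comp_exp_neg_mul_mul ht hs.le (hint s hs)
      (continuous_rampInv (a := exp (-1 - δ)) (exp_pos (-1)))
    exact ⟨mul_le_mul_of_nonneg_left (integral_rampInv_comp_exp_neg_mul_le_measureReal_Iic hs
        (exp_le_exp.2 (by linarith)) hfin.ne) hs.le,
      mul_le_mul_of_nonneg_left (measureReal_Iic_le_integral_rampInv_comp_exp_neg_mul hs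
        (exp_lt_exp.2 (by linarith)) hint') hs.le⟩

end Karamata

theorem stmt15_general (t : Measure ℝ) [IsLocallyFiniteMeasure t] (ht : t (Set.Iio 0) = 0)
    (c : ℝ) (hc : 0 ≤ c)
    (w : ℝ → ℝ)
    (hfin : ∀ s : ℝ, 0 < s →
      (∫⁻ x in Set.Ici (0 : ℝ), ENNReal.ofReal (Real.exp (-s * x)) ∂t) ≠ ⊤)
    (hw : ∀ s : ℝ, 0 < s →
      w s = (∫⁻ x in Set.Ici (0 : ℝ), ENNReal.ofReal (Real.exp (-s * x)) ∂t).toReal) :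
    Filter.Tendsto (fun s => s * w s) (nhdsWithin 0 (Set.Ioi 0)) (nhds c)
      ↔ Filter.Tendsto (fun y => (t (Set.Icc 0 y)).toReal / y) Filter.atTop (nhds c) := by
  have hrestrict : t.restrict (Ici 0) = t :=
    Measure.restrict_eq_self_of_ae_mem (ae_nonneg_of_measure_Iio_eq_zero ht)
  rw [hrestrict] at hfin hw
  have hint : ∀ s, 0 < s → Integrable (fun x => exp (-s * x)) t := fun s hs =>
    ⟨by fun_prop, (hasFiniteIntegral_iff_ofReal (ae_of_all _ fun x => (exp_pos _).le)).2
      (hfin s hs).lt_top⟩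
  have hsw : ∀ᶠ s in 𝓝[>] 0, s * ∫ x, exp (-s * x) ∂t = s * w s := by
    filter_upwards [self_mem_nhdsWithin] with s (hs : 0 < s)
    rw [hw s hs, integral_eq_lintegral_of_nonneg_ae (ae_of_all _ fun x => (exp_pos _).le)
      (by fun_prop)]
  have hIic : ∀ y, t (Iic y) ≠ ⊤ := fun y =>
    (measure_Iic_lt_top_of_integrable_exp one_pos (hint 1 one_pos) y).ne
  simp_rw [← measure_Iic_eq_measure_Icc ht, ← measureReal_def]
  constructor
  · intro hA
    have hA' := hA.congr' (hsw.mono fun s h => h.symm)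
    refine ((tendsto_mul_measureReal_Iic_inv hc ht hint hA').comp
      tendsto_inv_atTop_nhdsGT_zero).congr fun y => ?_
    simp [div_eq_inv_mul]
  · intro hU
    have hmono : Monotone fun y => t.real (Iic y) := fun y y' h =>
      measureReal_mono (Iic_subset_Iic.2 h) (hIic y')
    refine (tendsto_integral_exp_neg_mul_mul_div hmono hU).congr' ?_
    filter_upwards [hsw, self_mem_nhdsWithin] with s hs (hs0 : 0 < s)
    rw [← hs, integral_exp_neg_mul_eq_integral_measureReal_Iic ht hIic hs0,
      ← integral_const_mul]
    simp_rw [mul_left_comm]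

/-- Tauberian theorem (index 1): for a Radon measure `t` on `[0,∞)` with finite Laplace
transform `w(s) = ∫ e^{-sx} t(dx)` for `s > 0`, `s·w(s) → c₀` as `s → 0+` iff
`U(y)/y = t([0,y])/y → c₀` as `y → ∞`. -/
theorem stmt15 (t : Measure ℝ) [IsLocallyFiniteMeasure t] (ht : t (Set.Iio 0) = 0)
    (c : ℝ) (hc : 0 ≤ c)
    (w : ℝ → ℝ) (hwcont : ContinuousOn w (Set.Ioi 0)) (hwnn : ∀ s : ℝ, 0 < s → 0 ≤ w s)
    (hfin : ∀ s : ℝ, 0 < s →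
      (∫⁻ x in Set.Ici (0 : ℝ), ENNReal.ofReal (Real.exp (-s * x)) ∂t) ≠ ⊤)
    (hw : ∀ s : ℝ, 0 < s →
      w s = (∫⁻ x in Set.Ici (0 : ℝ), ENNReal.ofReal (Real.exp (-s * x)) ∂t).toReal) :
    Filter.Tendsto (fun s => s * w s) (nhdsWithin 0 (Set.Ioi 0)) (nhds c)
      ↔ Filter.Tendsto (fun y => (t (Set.Icc 0 y)).toReal / y) Filter.atTop (nhds c) :=
  stmt15_general t ht c hc w hfin hw
end

section
/- Let a > 1 and let Z^{(1)}, Z^{(2)}, … be random variables with Z^{(n)} ≥ 1 a.s., with Laplace transforms g^{(n)}(s) = E[e^{-s Z^{(n)}}] and h^{(n)}(s) = E[e^{-s Z^{(n)}} 1_{1 ≤ Z^{(n)} < a}], satisfying 1 - g^{(n+1)}(s) = (1 - g^{(1)}(s/a^n)) exp(Σ_{j=0}^{n-1} h^{(j+1)}(s/a^{n-j})) for all s ≥ 0. Then for every n ≥ 1: (1/a^n) exp(Σ_{j=0}^{n-1} h^{(j+1)}(0)) ≤ 2ea/(a-1). -/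
/-!
Evaluate the recursion at `s = (a - 1)/a`. Since `Z⁽¹⁾ ≥ 1`, the first factor is at least
`s/(2aⁿ)`, while `e^{-x} ≥ 1 - x` and `Z⁽ʲ⁾ < a` on the truncation set give
`h⁽ʲ⁺¹⁾(s/aⁿ⁻ʲ) ≥ h⁽ʲ⁺¹⁾(0) - (a - 1)/aⁿ⁻ʲ`, and these losses telescope to `1 - a⁻ⁿ ≤ 1`.
As the left-hand side `1 - g⁽ⁿ⁺¹⁾(s)` is at most `1`, this gives
`s/(2aⁿ) · exp(Σⱼ h⁽ʲ⁺¹⁾(0) - 1) ≤ 1`.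
-/

open MeasureTheory Real Set Finset

lemma exp_neg_le_one_sub_half {t : ℝ} (ht0 : 0 ≤ t) (ht1 : t ≤ 1) :
    exp (-t) ≤ 1 - t / 2 := by
  -- convexity of `exp` on `[-1, 0]`, together with `exp (-1) ≤ 1/2`
  have hconv := convexOn_exp.2 (mem_univ (0 : ℝ)) (mem_univ (-1 : ℝ))
    (by linarith : (0 : ℝ) ≤ 1 - t) ht0 (by ring)
  simp only [smul_eq_mul, mul_zero, zero_add, mul_neg_one, exp_zero] at hconv
  have he : exp (-1) ≤ 1 / 2 := by
    rw [exp_neg, inv_le_comm₀ (exp_pos 1) (by norm_num)]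
    linarith [add_one_le_exp (1 : ℝ)]
  nlinarith

lemma sum_range_sub_one_div_pow_sub {a : ℝ} (ha : a ≠ 0) (n : ℕ) :
    ∑ j ∈ range n, (a - 1) / a ^ (n - j) = 1 - 1 / a ^ n := by
  induction n with
  | zero => simp
  | succ n ih =>
    rw [sum_range_succ', Nat.sub_zero]
    simp only [Nat.succ_sub_succ, ih]
    field_simp
    ring

section Laplace

variable {Ω : Type*} [MeasurableSpace Ω] {μ : Measure Ω} {X : Ω → ℝ} {t : ℝ}

lemma integral_exp_neg_mul_le_exp_neg [IsProbabilityMeasure μ] (hX : ∀ᵐ ω ∂μ, 1 ≤ X ω)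
    (ht : 0 ≤ t) : ∫ ω, exp (-t * X ω) ∂μ ≤ exp (-t) := by
  calc ∫ ω, exp (-t * X ω) ∂μ ≤ ∫ _ω, exp (-t) ∂μ := by
        refine integral_mono_of_nonneg (.of_forall fun _ => (exp_pos _).le)
          (integrable_const _) ?_
        filter_upwards [hX] with ω hω
        exact exp_le_exp.2 (by nlinarith)
    _ = exp (-t) := by simp

lemma half_le_one_sub_integral_exp_neg_mul [IsProbabilityMeasure μ] (hX : ∀ᵐ ω ∂μ, 1 ≤ X ω)
    (ht0 : 0 ≤ t) (ht1 : t ≤ 1) : t / 2 ≤ 1 - ∫ ω, exp (-t * X ω) ∂μ := by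
  linarith [integral_exp_neg_mul_le_exp_neg hX ht0, exp_neg_le_one_sub_half ht0 ht1]

lemma measureReal_sub_mul_le_setIntegral_exp_neg_mul [IsProbabilityMeasure μ]
    (hX : AEMeasurable X μ) {S : Set Ω} (hS : MeasurableSet S) {c : ℝ} (hc : 0 ≤ c)
    (hXS : ∀ ω ∈ S, 0 ≤ X ω ∧ X ω ≤ c) (ht : 0 ≤ t) :
    μ.real S - t * c ≤ ∫ ω in S, exp (-t * X ω) ∂μ := by
  have hint : IntegrableOn (fun ω => exp (-t * X ω)) S μ := by
    refine (integrable_const (1 : ℝ)).mono' (hX.const_mul (-t)).exp.aestronglyMeasurable.restrict ?_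
    filter_upwards [ae_restrict_mem hS] with ω hω
    rw [norm_of_nonneg (exp_pos _).le, ← exp_zero]
    exact exp_le_exp.2 (by nlinarith [hXS ω hω])
  have hlin : ∀ ω ∈ S, 1 - t * c ≤ exp (-t * X ω) := fun ω hω => by
    nlinarith [add_one_le_exp (-t * X ω), hXS ω hω]
  calc μ.real S - t * c ≤ (1 - t * c) * μ.real S := by
        nlinarith [measureReal_le_one (μ := μ) (s := S), measureReal_nonneg (μ := μ) (s := S),
          mul_nonneg ht hc]
    _ = ∫ _ω in S, (1 - t * c) ∂μ := by rw [setIntegral_const, smul_eq_mul, mul_comm]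
    _ ≤ ∫ ω in S, exp (-t * X ω) ∂μ :=
        setIntegral_mono_on (integrable_const _).integrableOn hint hS hlin

end Laplace
/-- Uniform bound: `(1/aⁿ) exp(Σ_{j=0}^{n-1} h^{(j+1)}(0)) ≤ 2ea/(a-1)` for the hierarchical
coalescence process with `Z^{(n)} ≥ 1` and the iterated recursion between the Laplace
transforms `g^{(n)}` and the truncated transforms `h^{(n)}`. -/
theorem stmt18 {Ω : Type*} [MeasurableSpace Ω] (μ : Measure Ω) [IsProbabilityMeasure μ]
    (a : ℝ) (ha : 1 < a)
    (Z : ℕ → Ω → ℝ) (hZm : ∀ n, Measurable (Z n)) (hZ1 : ∀ n, 1 ≤ n → ∀ᵐ ω ∂μ, 1 ≤ Z n ω)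
    (g h : ℕ → ℝ → ℝ)
    (hg : ∀ n s, g n s = ∫ ω, Real.exp (-s * Z n ω) ∂μ)
    (hh : ∀ n s, h n s = ∫ ω in {ω | 1 ≤ Z n ω ∧ Z n ω < a}, Real.exp (-s * Z n ω) ∂μ)
    (hrec : ∀ n : ℕ, 1 ≤ n → ∀ s : ℝ, 0 ≤ s →
      1 - g (n + 1) s
        = (1 - g 1 (s / a ^ n)) *
            Real.exp (∑ j ∈ Finset.range n, h (j + 1) (s / a ^ (n - j)))) :
    ∀ n : ℕ, 1 ≤ n →
      (1 / a ^ n) * Real.exp (∑ j ∈ Finset.range n, h (j + 1) 0)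
        ≤ 2 * Real.exp 1 * a / (a - 1) := by
  intro n hn
  have ha0 : 0 < a := by linarith
  set s := (a - 1) / a with hs
  have hs0 : 0 < s := div_pos (by linarith) ha0
  have hs1 : s ≤ 1 := div_le_one_of_le₀ (by linarith) ha0.le
  have hfirst : s / a ^ n / 2 ≤ 1 - g 1 (s / a ^ n) := by
    rw [hg]
    exact half_le_one_sub_integral_exp_neg_mul (hZ1 1 le_rfl) (by positivity)
      (div_le_one_of_le₀ (hs1.trans (one_le_pow₀ ha.le)) (by positivity))
  have htrunc : ∀ j, h (j + 1) 0 - (a - 1) / a ^ (n - j) ≤ h (j + 1) (s / a ^ (n - j)) := by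
    intro j
    have hS : MeasurableSet {ω | 1 ≤ Z (j + 1) ω ∧ Z (j + 1) ω < a} := hZm _ measurableSet_Ico
    rw [hh, hh]
    convert measureReal_sub_mul_le_setIntegral_exp_neg_mul (μ := μ) (hZm _).aemeasurable hS
      ha0.le (fun ω hω => ⟨zero_le_one.trans hω.1, hω.2.le⟩)
      (by positivity : 0 ≤ s / a ^ (n - j)) using 2
    · simp
    · rw [hs]; field_simp
  have hsum : ∑ j ∈ range n, h (j + 1) 0 - 1 ≤ ∑ j ∈ range n, h (j + 1) (s / a ^ (n - j)) := by
    have := sum_le_sum (s := range n) fun j _ => htrunc j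
    rw [sum_sub_distrib, sum_range_sub_one_div_pow_sub ha0.ne'] at this
    linarith [one_div_pos.2 (pow_pos ha0 n)]
  have key : s / a ^ n / 2 * exp (∑ j ∈ range n, h (j + 1) 0 - 1) ≤ 1 :=
    calc _ ≤ (1 - g 1 (s / a ^ n)) * exp (∑ j ∈ range n, h (j + 1) (s / a ^ (n - j))) :=
          mul_le_mul hfirst (exp_le_exp.2 hsum) (exp_pos _).le
            (hfirst.trans' (by positivity))
      _ = 1 - g (n + 1) s := (hrec n hn s hs0.le).symm
      _ ≤ 1 := sub_le_self _ (hg (n + 1) s ▸ integral_nonneg fun _ => (exp_pos _).le)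
  rw [exp_sub, hs] at key
  rw [le_div_iff₀ (by linarith)]
  field_simp at key ⊢
  linarith
end
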